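/- arXiv:math/0303091 — 5 statements merged into one kernel-verified Lean document; each statement's English description precedes it below -/
import Mathlib

section
/- Let $P = B_1 *_{B_0} B_2$ be an amalgamated free product of groups along injective homomorphisms $f_1: B_0 \to B_1$, $f_2: B_0 \to B_2$. Every element of $P$ either lies in the image of $B_0$, or can be written as a product $x_1 x_2 \cdots x_n$ where each $x_j$ lies in $B_1 \setminus f_1(B_0)$ or $B_2 \setminus f_2(B_0)$ and consecutive factors come from different groups; moreover no such alternating product of length $n \geq 1$ equals the identity element of $P$ (Normal Form Theorem). -/
/-- `(P, g₁, g₂)` is a pushout (amalgam) of `B₁ ←f₁- B₀ -f₂→ B₂` in groups. -/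
def IsGroupPushout {B₀ B₁ B₂ P : Type} [Group B₀] [Group B₁] [Group B₂] [Group P]
    (f₁ : B₀ →* B₁) (f₂ : B₀ →* B₂) (g₁ : B₁ →* P) (g₂ : B₂ →* P) : Prop :=
  g₁.comp f₁ = g₂.comp f₂ ∧
    ∀ (D : Type) [Group D], ∀ (h₁ : B₁ →* D) (h₂ : B₂ →* D),
      h₁.comp f₁ = h₂.comp f₂ → ∃! φ : P →* D, φ.comp g₁ = h₁ ∧ φ.comp g₂ = h₂

/-- A list of letters from `B₁ ⊕ B₂` is alternating (with respect to `f₁, f₂`) if each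
letter lies outside the image of `B₀` in its factor and consecutive letters come from
different factors. -/
def IsAlternating {B₀ B₁ B₂ : Type} [Group B₀] [Group B₁] [Group B₂]
    (f₁ : B₀ →* B₁) (f₂ : B₀ →* B₂) (l : List (B₁ ⊕ B₂)) : Prop :=
  (∀ x ∈ l, (∀ a : B₀, x ≠ Sum.inl (f₁ a)) ∧ ∀ a : B₀, x ≠ Sum.inr (f₂ a)) ∧
    l.Chain' fun x y => x.isLeft ≠ y.isLeft

namespace NFA

variable {B₀ B₁ B₂ P : Type} [Group B₀] [Group B₁] [Group B₂] [Group P]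
  {f₁ : B₀ →* B₁} {f₂ : B₀ →* B₂} {g₁ : B₁ →* P} {g₂ : B₂ →* P}

def Good (f₁ : B₀ →* B₁) (f₂ : B₀ →* B₂) (g₁ : B₁ →* P) (g₂ : B₂ →* P) (p : P) : Prop :=
  (∃ a : B₀, p = g₁ (f₁ a)) ∨
    ∃ l : List (B₁ ⊕ B₂), IsAlternating f₁ f₂ l ∧ l ≠ [] ∧
      (l.map (Sum.elim g₁ g₂)).prod = p

lemma good_mul_left₁ (hsq : g₁.comp f₁ = g₂.comp f₂) (b : B₁) {p : P}
    (hp : Good f₁ f₂ g₁ g₂ p) : Good f₁ f₂ g₁ g₂ (g₁ b * p) := by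
  have hsq' : ∀ a, g₁ (f₁ a) = g₂ (f₂ a) := fun a => DFunLike.congr_fun hsq a
  rcases hp with ⟨a, rfl⟩ | ⟨l, ⟨hmem, hch⟩, hne, rfl⟩
  · by_cases h : ∃ c, f₁ c = b * f₁ a
    · obtain ⟨c0, hc0⟩ := h
      exact Or.inl ⟨c0, by rw [hc0, ← map_mul]⟩
    · refine Or.inr ⟨[Sum.inl (b * f₁ a)], ⟨?_, List.isChain_singleton _⟩, by simp, by simp [map_mul]⟩
      intro z hz
      simp only [List.mem_singleton] at hz
      subst hz
      refine ⟨fun c hc => ?_, by simp⟩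
      simp only [Sum.inl.injEq] at hc
      exact h ⟨c, hc.symm⟩
  · cases l with
    | nil => exact absurd rfl hne
    | cons x t =>
      cases x with
      | inl c =>
        by_cases h : ∃ a, f₁ a = b * c
        · obtain ⟨a, ha⟩ := h
          cases t with
          | nil =>
            refine Or.inl ⟨a, ?_⟩
            simp only [List.map_cons, List.map_nil, List.prod_cons, List.prod_nil,
              Sum.elim_inl, mul_one]
            rw [← map_mul, ha]
          | cons y t' =>
            have hy : ∃ d, y = Sum.inr d := by
              rcases hch.rel_head with hrel
              cases y with
              | inl d => simp at hrel
              | inr d => exact ⟨d, rfl⟩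
            obtain ⟨d, rfl⟩ := hy
            refine Or.inr ⟨Sum.inr (f₂ a * d) :: t', ⟨?_, ?_⟩, by simp, ?_⟩
            · intro z hz
              rcases List.mem_cons.mp hz with rfl | hz
              · refine ⟨by simp, ?_⟩
                intro a' he
                simp only [Sum.inr.injEq] at he
                have : d = f₂ (a⁻¹ * a') := by
                  rw [map_mul, map_inv, ← he]; group
                exact (hmem (Sum.inr d) (by simp)).2 (a⁻¹ * a') (by rw [this])
              · exact hmem z (by simp [hz])
            · have := (List.isChain_cons.mp hch.tail)
              exact List.isChain_cons.mpr ⟨fun y hy => this.1 y hy, this.2⟩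
            · have hbc : g₁ b * g₁ c = g₂ (f₂ a) := by rw [← map_mul, ← ha, hsq']
              simp only [List.map_cons, List.prod_cons, Sum.elim_inl, Sum.elim_inr,
                map_mul, ← hbc]
              simp [mul_assoc]
        · refine Or.inr ⟨Sum.inl (b * c) :: t, ⟨?_, ?_⟩, by simp, ?_⟩
          · intro z hz
            rcases List.mem_cons.mp hz with rfl | hz
            · refine ⟨?_, by simp⟩
              intro a' he
              simp only [Sum.inl.injEq] at he
              exact h ⟨a', he.symm⟩
            · exact hmem z (by simp [hz])
          · have := (List.isChain_cons.mp hch)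
            exact List.isChain_cons.mpr ⟨fun y hy => this.1 y hy, this.2⟩
          · simp [map_mul, mul_assoc]
      | inr c =>
        by_cases h : ∃ a, f₁ a = b
        · obtain ⟨a, rfl⟩ := h
          refine Or.inr ⟨Sum.inr (f₂ a * c) :: t, ⟨?_, ?_⟩, by simp, ?_⟩
          · intro z hz
            rcases List.mem_cons.mp hz with rfl | hz
            · refine ⟨by simp, ?_⟩
              intro a' he
              simp only [Sum.inr.injEq] at he
              have : c = f₂ (a⁻¹ * a') := by
                rw [map_mul, map_inv, ← he]; group
              exact (hmem (Sum.inr c) (by simp)).2 (a⁻¹ * a') (by rw [this])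
            · exact hmem z (by simp [hz])
          · have := (List.isChain_cons.mp hch)
            exact List.isChain_cons.mpr ⟨fun y hy => this.1 y hy, this.2⟩
          · simp only [List.map_cons, List.prod_cons, Sum.elim_inr, map_mul, hsq' a]
            simp [mul_assoc]
        · refine Or.inr ⟨Sum.inl b :: Sum.inr c :: t, ⟨?_, ?_⟩, by simp, by simp⟩
          · intro z hz
            rcases List.mem_cons.mp hz with rfl | hz
            · refine ⟨?_, by simp⟩
              intro a' he
              simp only [Sum.inl.injEq] at he
              exact h ⟨a', he.symm⟩
            · exact hmem z hz
          · exact hch.cons (by simp)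


lemma good_mul_left₂ (hsq : g₁.comp f₁ = g₂.comp f₂) (b : B₂) {p : P}
    (hp : Good f₁ f₂ g₁ g₂ p) : Good f₁ f₂ g₁ g₂ (g₂ b * p) := by
  have hsq' : ∀ a, g₁ (f₁ a) = g₂ (f₂ a) := fun a => DFunLike.congr_fun hsq a
  rcases hp with ⟨a, rfl⟩ | ⟨l, ⟨hmem, hch⟩, hne, rfl⟩
  · by_cases h : ∃ c, f₂ c = b * f₂ a
    · obtain ⟨c0, hc0⟩ := h
      refine Or.inl ⟨c0, ?_⟩
      rw [hsq' a, hsq' c0, hc0, ← map_mul]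
    · refine Or.inr ⟨[Sum.inr (b * f₂ a)], ⟨?_, List.isChain_singleton _⟩, by simp, ?_⟩
      · intro z hz
        simp only [List.mem_singleton] at hz
        subst hz
        refine ⟨by simp, fun c hc => ?_⟩
        simp only [Sum.inr.injEq] at hc
        exact h ⟨c, hc.symm⟩
      · rw [hsq' a]
        simp [map_mul]
  · cases l with
    | nil => exact absurd rfl hne
    | cons x t =>
      cases x with
      | inr c =>
        by_cases h : ∃ a, f₂ a = b * c
        · obtain ⟨a, ha⟩ := h
          cases t with
          | nil =>
            refine Or.inl ⟨a, ?_⟩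
            simp only [List.map_cons, List.map_nil, List.prod_cons, List.prod_nil,
              Sum.elim_inr, mul_one]
            rw [← map_mul, hsq' a, ha]
          | cons y t' =>
            have hy : ∃ d, y = Sum.inl d := by
              rcases hch.rel_head with hrel
              cases y with
              | inl d => exact ⟨d, rfl⟩
              | inr d => simp at hrel
            obtain ⟨d, rfl⟩ := hy
            refine Or.inr ⟨Sum.inl (f₁ a * d) :: t', ⟨?_, ?_⟩, by simp, ?_⟩
            · intro z hz
              rcases List.mem_cons.mp hz with rfl | hz
              · refine ⟨?_, by simp⟩
                intro a' he
                simp only [Sum.inl.injEq] at he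
                have : d = f₁ (a⁻¹ * a') := by
                  rw [map_mul, map_inv, ← he]; group
                exact (hmem (Sum.inl d) (by simp)).1 (a⁻¹ * a') (by rw [this])
              · exact hmem z (by simp [hz])
            · have := (List.isChain_cons.mp hch.tail)
              exact List.isChain_cons.mpr ⟨fun y hy => this.1 y hy, this.2⟩
            · have hbc : g₂ b * g₂ c = g₁ (f₁ a) := by rw [← map_mul, ← ha, hsq']
              simp only [List.map_cons, List.prod_cons, Sum.elim_inl, Sum.elim_inr,
                map_mul, ← hbc]
              simp [mul_assoc]
        · refine Or.inr ⟨Sum.inr (b * c) :: t, ⟨?_, ?_⟩, by simp, ?_⟩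
          · intro z hz
            rcases List.mem_cons.mp hz with rfl | hz
            · refine ⟨by simp, ?_⟩
              intro a' he
              simp only [Sum.inr.injEq] at he
              exact h ⟨a', he.symm⟩
            · exact hmem z (by simp [hz])
          · have := (List.isChain_cons.mp hch)
            exact List.isChain_cons.mpr ⟨fun y hy => this.1 y hy, this.2⟩
          · simp [map_mul, mul_assoc]
      | inl c =>
        by_cases h : ∃ a, f₂ a = b
        · obtain ⟨a, rfl⟩ := h
          refine Or.inr ⟨Sum.inl (f₁ a * c) :: t, ⟨?_, ?_⟩, by simp, ?_⟩
          · intro z hz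
            rcases List.mem_cons.mp hz with rfl | hz
            · refine ⟨?_, by simp⟩
              intro a' he
              simp only [Sum.inl.injEq] at he
              have : c = f₁ (a⁻¹ * a') := by
                rw [map_mul, map_inv, ← he]; group
              exact (hmem (Sum.inl c) (by simp)).1 (a⁻¹ * a') (by rw [this])
            · exact hmem z (by simp [hz])
          · have := (List.isChain_cons.mp hch)
            exact List.isChain_cons.mpr ⟨fun y hy => this.1 y hy, this.2⟩
          · simp only [List.map_cons, List.prod_cons, Sum.elim_inl, map_mul, ← hsq' a]
            simp [mul_assoc]
        · refine Or.inr ⟨Sum.inr b :: Sum.inl c :: t, ⟨?_, ?_⟩, by simp, by simp⟩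
          · intro z hz
            rcases List.mem_cons.mp hz with rfl | hz
            · refine ⟨by simp, ?_⟩
              intro a' he
              simp only [Sum.inr.injEq] at he
              exact h ⟨a', he.symm⟩
            · exact hmem z hz
          · exact hch.cons (by simp)


def Fam (B₁ B₂ : Type) : Bool → Type
  | true => B₁
  | false => B₂

instance famGroup {B₁ B₂ : Type} [Group B₁] [Group B₂] : ∀ b, Group (Fam B₁ B₂ b)
  | true => ‹Group B₁›
  | false => ‹Group B₂›

variable {B₀ B₁ B₂ P : Type} [Group B₀] [Group B₁] [Group B₂] [Group P]
  {f₁ : B₀ →* B₁} {f₂ : B₀ →* B₂} {g₁ : B₁ →* P} {g₂ : B₂ →* P}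

def fam (f₁ : B₀ →* B₁) (f₂ : B₀ →* B₂) : ∀ b, B₀ →* Fam B₁ B₂ b
  | true => f₁
  | false => f₂

def toLetter : B₁ ⊕ B₂ → Σ b, Fam B₁ B₂ b :=
  Sum.elim (fun b => ⟨true, b⟩) fun c => ⟨false, c⟩

lemma closure_eq_top (hP : IsGroupPushout f₁ f₂ g₁ g₂) :
    Subgroup.closure (Set.range g₁ ∪ Set.range g₂) = ⊤ := by
  set S := Subgroup.closure (Set.range g₁ ∪ Set.range g₂) with hS
  have hr₁ : ∀ x, g₁ x ∈ S := fun x => Subgroup.subset_closure (Or.inl ⟨x, rfl⟩)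
  have hr₂ : ∀ x, g₂ x ∈ S := fun x => Subgroup.subset_closure (Or.inr ⟨x, rfl⟩)
  obtain ⟨ψ, ⟨hψ₁, hψ₂⟩, -⟩ := hP.2 S (g₁.codRestrict S hr₁) (g₂.codRestrict S hr₂)
    (by ext a; show g₁ (f₁ a) = g₂ (f₂ a); exact DFunLike.congr_fun hP.1 a)
  obtain ⟨χ, -, hu⟩ := hP.2 P g₁ g₂ hP.1
  have h1 : S.subtype.comp ψ = χ := by
    refine hu _ ⟨?_, ?_⟩
    · rw [MonoidHom.comp_assoc, hψ₁]; ext x; rfl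
    · rw [MonoidHom.comp_assoc, hψ₂]; ext x; rfl
  have h2 : MonoidHom.id P = χ := hu _ ⟨by ext x; rfl, by ext x; rfl⟩
  rw [eq_top_iff]
  intro p _
  have hp : ((ψ p : P)) = p := by
    rw [show ((ψ p : P)) = (S.subtype.comp ψ) p from rfl, h1, ← h2]; rfl
  exact hp ▸ (ψ p).2

lemma prod_ne_one (hf₁ : Function.Injective f₁) (hf₂ : Function.Injective f₂)
    (hP : IsGroupPushout f₁ f₂ g₁ g₂) (l : List (B₁ ⊕ B₂))
    (halt : IsAlternating f₁ f₂ l) (hne : l ≠ []) :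
    (l.map (Sum.elim g₁ g₂)).prod ≠ 1 := by
  obtain ⟨hmem, hch⟩ := halt
  intro h1
  obtain ⟨ψ, ⟨hψ₁, hψ₂⟩, -⟩ := hP.2 (Monoid.PushoutI (fam f₁ f₂))
    (Monoid.PushoutI.of (φ := fam f₁ f₂) true) (Monoid.PushoutI.of (φ := fam f₁ f₂) false)
    ((Monoid.PushoutI.of_comp_eq_base (φ := fam f₁ f₂) true).trans
      (Monoid.PushoutI.of_comp_eq_base (φ := fam f₁ f₂) false).symm)
  have hinj : ∀ i, Function.Injective (fam f₁ f₂ i) := by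
    intro i; cases i; exacts [hf₂, hf₁]
  let w : Monoid.CoprodI.Word (Fam B₁ B₂) :=
    { toList := l.map toLetter
      ne_one := by
        intro g hg
        obtain ⟨x, hx, rfl⟩ := List.mem_map.mp hg
        cases x with
        | inl b =>
          intro hb
          exact (hmem _ hx).1 1 (by simp [toLetter] at hb; simp [hb, map_one]; rfl)
        | inr c =>
          intro hc
          exact (hmem _ hx).2 1 (by simp [toLetter] at hc; simp [hc, map_one]; rfl)
      chain_ne := by
        rw [List.isChain_map]
        refine hch.imp ?_
        rintro (x | x) (y | y) h <;> simp_all [toLetter] }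
  have hred : Monoid.PushoutI.Reduced (fam f₁ f₂) w := by
    intro g hg
    obtain ⟨x, hx, rfl⟩ := List.mem_map.mp hg
    cases x with
    | inl b =>
      rintro ⟨a, ha⟩
      have hb : f₁ a = b := ha
      exact (hmem _ hx).1 a (by rw [hb])
    | inr c =>
      rintro ⟨a, ha⟩
      have hc : f₂ a = c := ha
      exact (hmem _ hx).2 a (by rw [hc])
  have hkey : ∀ x : B₁ ⊕ B₂, ψ (Sum.elim g₁ g₂ x)
      = Monoid.PushoutI.of (φ := fam f₁ f₂) (toLetter x).1 (toLetter x).2 := by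
    rintro (b | c)
    · exact DFunLike.congr_fun hψ₁ b
    · exact DFunLike.congr_fun hψ₂ c
  have hprod : Monoid.PushoutI.ofCoprodI (φ := fam f₁ f₂) w.prod
      = ψ ((l.map (Sum.elim g₁ g₂)).prod) := by
    show Monoid.PushoutI.ofCoprodI (((l.map toLetter).map
        fun x => Monoid.CoprodI.of x.snd).prod) = _
    rw [map_list_prod, map_list_prod, List.map_map, List.map_map, List.map_map]
    refine congrArg List.prod (List.map_congr_left fun x _ => ?_)
    simp only [Function.comp_apply, Monoid.PushoutI.ofCoprodI_of]
    exact (hkey x).symm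
  rw [h1, map_one] at hprod
  have hw : w = Monoid.CoprodI.Word.empty :=
    Monoid.PushoutI.Reduced.eq_empty_of_mem_range hinj hred ⟨1, by rw [map_one, hprod]⟩
  have : l.map toLetter = [] := congrArg Monoid.CoprodI.Word.toList hw
  exact hne (List.map_eq_nil_iff.mp this)

end NFA

/-- Normal Form Theorem: in the amalgam `P = B₁ *_{B₀} B₂` along injective homomorphisms,
every element lies in the image of `B₀` or is an alternating product, and no nonempty
alternating product is the identity. -/
theorem normal_form_of_amalgam
    {B₀ B₁ B₂ P : Type} [Group B₀] [Group B₁] [Group B₂] [Group P]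
    (f₁ : B₀ →* B₁) (f₂ : B₀ →* B₂) (g₁ : B₁ →* P) (g₂ : B₂ →* P)
    (hf₁ : Function.Injective f₁) (hf₂ : Function.Injective f₂)
    (hP : IsGroupPushout f₁ f₂ g₁ g₂) :
    (∀ p : P, (∃ a : B₀, p = g₁ (f₁ a)) ∨
        ∃ l : List (B₁ ⊕ B₂), IsAlternating f₁ f₂ l ∧ l ≠ [] ∧
          (l.map (Sum.elim g₁ g₂)).prod = p) ∧
      ∀ l : List (B₁ ⊕ B₂), IsAlternating f₁ f₂ l → l ≠ [] →
        (l.map (Sum.elim g₁ g₂)).prod ≠ 1 := by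
  constructor
  · intro p
    have hp : p ∈ Subgroup.closure (Set.range ⇑g₁ ∪ Set.range ⇑g₂) := by
      rw [NFA.closure_eq_top hP]; trivial
    exact Subgroup.closure_induction_left (p := fun x _ => NFA.Good f₁ f₂ g₁ g₂ x)
      (Or.inl ⟨1, by simp⟩)
      (by rintro x (⟨b, rfl⟩ | ⟨b, rfl⟩) y hy ih
          exacts [NFA.good_mul_left₁ hP.1 b ih, NFA.good_mul_left₂ hP.1 b ih])
      (by rintro x (⟨b, rfl⟩ | ⟨b, rfl⟩) y hy ih
          · rw [← map_inv]; exact NFA.good_mul_left₁ hP.1 b⁻¹ ih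
          · rw [← map_inv]; exact NFA.good_mul_left₂ hP.1 b⁻¹ ih)
      hp
  · exact fun l h hne => NFA.prod_ne_one hf₁ hf₂ hP l h hne
end

section
/- Let $P = B_1 *_{B_0} B_2$ be an amalgamated free product of groups along injective homomorphisms. If two alternating words $x_1 \cdots x_n$ and $y_1 \cdots y_m$ (with letters alternately in $B_1 \setminus f_1(B_0)$ and $B_2 \setminus f_2(B_0)$) represent the same element of $P$, then $n = m$ and the sequences of indices (specifying from which factor each letter comes) coincide. -/
section Aux

variable {B₀ B₁ B₂ : Type} [Group B₀] [Group B₁] [Group B₂]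

/-- The two factors, as a `Bool`-indexed family. -/
def AmalgFac (B₁ B₂ : Type) : Bool → Type := fun b => cond b B₁ B₂

instance amalgFacGroup : ∀ b, Group (AmalgFac B₁ B₂ b)
  | true => ‹Group B₁›
  | false => ‹Group B₂›

/-- The two maps from the base, as a family. -/
def amalgPhi (f₁ : B₀ →* B₁) (f₂ : B₀ →* B₂) : ∀ b, B₀ →* AmalgFac B₁ B₂ b
  | true => f₁
  | false => f₂

/-- Letters as sigma types. -/
def toLetter : B₁ ⊕ B₂ → Σ b, AmalgFac B₁ B₂ b
  | Sum.inl g => ⟨true, g⟩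
  | Sum.inr g => ⟨false, g⟩

@[simp] lemma toLetter_fst (x : B₁ ⊕ B₂) : (toLetter (B₁ := B₁) (B₂ := B₂) x).1 = x.isLeft := by
  cases x <;> rfl

end Aux

theorem index_sequences_coincide_of_amalgam'
    {B₀ B₁ B₂ P : Type} [Group B₀] [Group B₁] [Group B₂] [Group P]
    (f₁ : B₀ →* B₁) (f₂ : B₀ →* B₂) (g₁ : B₁ →* P) (g₂ : B₂ →* P)
    (hf₁ : Function.Injective f₁) (hf₂ : Function.Injective f₂)
    (hP : (g₁.comp f₁ = g₂.comp f₂ ∧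
    ∀ (D : Type) [Group D], ∀ (h₁ : B₁ →* D) (h₂ : B₂ →* D),
      h₁.comp f₁ = h₂.comp f₂ → ∃! φ : P →* D, φ.comp g₁ = h₁ ∧ φ.comp g₂ = h₂))
    (l m : List (B₁ ⊕ B₂))
    (hl : ((∀ x ∈ l, (∀ a : B₀, x ≠ Sum.inl (f₁ a)) ∧ ∀ a : B₀, x ≠ Sum.inr (f₂ a)) ∧
    l.Chain' fun x y => x.isLeft ≠ y.isLeft))
    (hm : ((∀ x ∈ m, (∀ a : B₀, x ≠ Sum.inl (f₁ a)) ∧ ∀ a : B₀, x ≠ Sum.inr (f₂ a)) ∧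
    m.Chain' fun x y => x.isLeft ≠ y.isLeft))
    (h : (l.map (Sum.elim g₁ g₂)).prod = (m.map (Sum.elim g₁ g₂)).prod) :
    l.length = m.length ∧ l.map Sum.isLeft = m.map Sum.isLeft := by
  classical
  set φ := amalgPhi f₁ f₂ with hφdef
  have hφinj : ∀ b, Function.Injective (φ b) := by
    intro b; cases b
    · exact hf₂
    · exact hf₁
  -- the map ψ : P →* PushoutI φ
  obtain ⟨ψ, ⟨hψ₁, hψ₂⟩, -⟩ := hP.2 (Monoid.PushoutI φ)
    (Monoid.PushoutI.of (φ := φ) true : B₁ →* Monoid.PushoutI φ)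
    (Monoid.PushoutI.of (φ := φ) false : B₂ →* Monoid.PushoutI φ)
    (by exact (Monoid.PushoutI.of_comp_eq_base (φ := φ) true).trans
          (Monoid.PushoutI.of_comp_eq_base (φ := φ) false).symm)
  -- build words
  have mkWord : ∀ (l : List (B₁ ⊕ B₂)),
      ((∀ x ∈ l, (∀ a : B₀, x ≠ Sum.inl (f₁ a)) ∧ ∀ a : B₀, x ≠ Sum.inr (f₂ a)) ∧
        l.Chain' fun x y => x.isLeft ≠ y.isLeft) →
      ∃ w : Monoid.CoprodI.Word (AmalgFac B₁ B₂), w.toList = l.map toLetter ∧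
        Monoid.PushoutI.Reduced φ w ∧
        Monoid.PushoutI.ofCoprodI w.prod = ψ ((l.map (Sum.elim g₁ g₂)).prod) := by
    intro l hl
    have hred : ∀ x ∈ l.map (toLetter (B₁ := B₁) (B₂ := B₂)), x.2 ∉ (φ x.1).range := by
      intro x hx
      simp only [List.mem_map] at hx
      obtain ⟨y, hy, rfl⟩ := hx
      rintro ⟨a, ha⟩
      cases y with
      | inl g => exact (hl.1 _ hy).1 a (congrArg Sum.inl ha.symm)
      | inr g => exact (hl.1 _ hy).2 a (congrArg Sum.inr ha.symm)
    refine ⟨⟨l.map toLetter, ?_, ?_⟩, rfl, hred, ?_⟩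
    · intro x hx
      have := hred x hx
      intro h1
      exact this ⟨1, by rw [map_one, h1]⟩
    · rw [List.isChain_map]
      refine hl.2.imp ?_
      intro a b hab
      simp only [toLetter_fst]
      exact hab
    · show Monoid.PushoutI.ofCoprodI (List.prod (List.map _ (List.map toLetter l))) = _
      rw [map_list_prod, map_list_prod, List.map_map, List.map_map, List.map_map]
      congr 1
      apply List.map_congr_left
      intro x hx
      cases x with
      | inl g =>
        show Monoid.PushoutI.ofCoprodI (Monoid.CoprodI.of (M := AmalgFac B₁ B₂) (i := true) g)
          = ψ (g₁ g)
        exact (Monoid.PushoutI.ofCoprodI_of (φ := φ) (i := true) g).trans (by rw [← hψ₁]; rfl)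
      | inr g =>
        show Monoid.PushoutI.ofCoprodI (Monoid.CoprodI.of (M := AmalgFac B₁ B₂) (i := false) g)
          = ψ (g₂ g)
        exact (Monoid.PushoutI.ofCoprodI_of (φ := φ) (i := false) g).trans (by rw [← hψ₂]; rfl)
  obtain ⟨wl, hwl, hwlred, hwlprod⟩ := mkWord l hl
  obtain ⟨wm, hwm, hwmred, hwmprod⟩ := mkWord m hm
  obtain ⟨d⟩ := Monoid.PushoutI.NormalWord.transversal_nonempty φ hφinj
  obtain ⟨wl', hwl'prod, hwl'map⟩ := hwlred.exists_normalWord_prod_eq d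
  obtain ⟨wm', hwm'prod, hwm'map⟩ := hwmred.exists_normalWord_prod_eq d
  have : wl' = wm' := Monoid.PushoutI.NormalWord.prod_injective
    (by rw [hwl'prod, hwm'prod, hwlprod, hwmprod, h])
  have hmap : wl.toList.map Sigma.fst = wm.toList.map Sigma.fst := by
    rw [← hwl'map, ← hwm'map, this]
  rw [hwl, hwm, List.map_map, List.map_map] at hmap
  have hmap' : l.map Sum.isLeft = m.map Sum.isLeft := by
    have : (Sigma.fst ∘ toLetter (B₁ := B₁) (B₂ := B₂)) = Sum.isLeft := by
      funext x; simp [Function.comp]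
    rwa [this] at hmap
  exact ⟨by have := congrArg List.length hmap'; simpa using this, hmap'⟩

/-- In an amalgam `P = B₁ *_{B₀} B₂` along injective homomorphisms, if two alternating
words represent the same element of `P` then they have the same length and the same
sequence of indices (i.e. which factor each letter comes from). -/
theorem index_sequences_coincide_of_amalgam
    {B₀ B₁ B₂ P : Type} [Group B₀] [Group B₁] [Group B₂] [Group P]
    (f₁ : B₀ →* B₁) (f₂ : B₀ →* B₂) (g₁ : B₁ →* P) (g₂ : B₂ →* P)
    (hf₁ : Function.Injective f₁) (hf₂ : Function.Injective f₂)
    (hP : IsGroupPushout f₁ f₂ g₁ g₂)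
    (l m : List (B₁ ⊕ B₂)) (hl : IsAlternating f₁ f₂ l) (hm : IsAlternating f₁ f₂ m)
    (h : (l.map (Sum.elim g₁ g₂)).prod = (m.map (Sum.elim g₁ g₂)).prod) :
    l.length = m.length ∧ l.map Sum.isLeft = m.map Sum.isLeft := by
  exact index_sequences_coincide_of_amalgam' f₁ f₂ g₁ g₂ hf₁ hf₂ hP l m hl hm h
end

section
/- Let $X$ be a topological space and $A, B, A \cap B$ closed subspaces of $X$ such that the inclusions $A \hookrightarrow X$, $B \hookrightarrow X$, and $A \cap B \hookrightarrow X$ are all closed cofibrations. Then the inclusion $A \cup B \hookrightarrow X$ is a closed cofibration. -/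
open unitInterval

/-- A closed subspace `A ⊆ X` is a closed cofibration if the inclusion is a closed
embedding satisfying the homotopy extension property with respect to every space:
any homotopy on `A` together with an initial map on `X` extends to a homotopy on `X`. -/
def IsClosedCofibration {X : Type} [TopologicalSpace X] (A : Set X) : Prop :=
  IsClosed A ∧
    ∀ (Y : Type) [TopologicalSpace Y] (f : X → Y) (H : A × I → Y),
      Continuous f → Continuous H → (∀ a : A, H (a, 0) = f a) →
        ∃ G : X × I → Y, Continuous G ∧ (∀ x : X, G (x, 0) = f x) ∧
          ∀ (a : A) (t : I), G (a, t) = H (a, t)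

open Set

noncomputable section
namespace Lillig

def cl (r : ℝ) : ℝ := max 0 (min 1 r)

lemma cl_nonneg (r : ℝ) : 0 ≤ cl r := le_max_left _ _
lemma cl_le_one (r : ℝ) : cl r ≤ 1 := max_le zero_le_one (min_le_left _ _)
lemma cl_of_nonpos {r : ℝ} (h : r ≤ 0) : cl r = 0 :=
  max_eq_left ((min_le_right _ _).trans h)
lemma cl_lt_one_of_lt {r : ℝ} (h : r < 1) : cl r < 1 :=
  max_lt one_pos ((min_le_right _ _).trans_lt h)
lemma lt_one_of_cl_lt_one {r : ℝ} (h : cl r < 1) : r < 1 := by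
  by_contra hr
  push_neg at hr
  have : min 1 r = 1 := min_eq_left hr
  simp [cl, this] at h
lemma half_lt_cl {r : ℝ} (h : 1/2 < r) : 1/2 < cl r :=
  lt_max_of_lt_right (lt_min (by norm_num) h)
lemma continuous_cl : Continuous cl :=
  continuous_const.max (continuous_const.min continuous_id)

def pI (r : ℝ) : I := Set.projIcc 0 1 zero_le_one r

lemma pI_coe {r : ℝ} (h0 : 0 ≤ r) (h1 : r ≤ 1) : (pI r : ℝ) = r := by
  rw [pI, Set.projIcc_of_mem zero_le_one ⟨h0, h1⟩]
lemma pI_of_nonpos {r : ℝ} (h : r ≤ 0) : pI r = 0 := by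
  rw [pI, Set.projIcc_of_le_left zero_le_one h]; rfl
lemma pI_zero : pI 0 = 0 := pI_of_nonpos le_rfl
lemma pI_coe_I (t : I) : pI (t : ℝ) = t := Set.projIcc_val zero_le_one t
lemma continuous_pI : Continuous pI := by unfold pI; exact continuous_projIcc

lemma tube {X Z : Type*} [TopologicalSpace X] [TopologicalSpace Z]
    {g : X × I → Z} (hg : Continuous g) {x₀ : X} {V : Set Z} (hV : IsOpen V)
    (h : ∀ t : I, g (x₀, t) ∈ V) :
    ∃ W : Set X, IsOpen W ∧ x₀ ∈ W ∧ ∀ x ∈ W, ∀ t : I, g (x, t) ∈ V := by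
  have hsub : ({x₀} : Set X) ×ˢ (univ : Set I) ⊆ g ⁻¹' V := by
    rintro ⟨x, t⟩ ⟨hx, -⟩
    rcases hx with rfl
    exact h t
  obtain ⟨W, V', hW, -, hxW, htV', hWV⟩ :=
    generalized_tube_lemma isCompact_singleton (isCompact_univ (X := I))
      (hV.preimage hg) hsub
  exact ⟨W, hW, hxW rfl, fun x hx t => hWV ⟨hx, htV' trivial⟩⟩

/-- squeeze continuity: `F` continuous off `R`, squeezed by a continuous bound vanishing on `R`. -/
lemma cont_of_squeeze {X : Type*} [TopologicalSpace X] {R : Set X} {F bnd : X → ℝ}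
    (hb : Continuous bnd) (h0 : ∀ x, 0 ≤ F x) (h1 : ∀ x, F x ≤ bnd x)
    (hR : ∀ x ∈ R, bnd x = 0) (hc : ∀ x ∉ R, ContinuousAt F x) : Continuous F := by
  rw [continuous_iff_continuousAt]
  intro x₀
  by_cases hx : x₀ ∈ R
  · have hF0 : F x₀ = 0 := le_antisymm (by simpa [hR x₀ hx] using h1 x₀) (h0 x₀)
    have hbt : Filter.Tendsto bnd (nhds x₀) (nhds 0) := hR x₀ hx ▸ hb.continuousAt
    rw [ContinuousAt, hF0]
    exact tendsto_of_tendsto_of_tendsto_of_le_of_le tendsto_const_nhds hbt h0 h1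
  · exact hc x₀ hx

/-- continuity of a parametrized supremum. -/
lemma cont_sup {X : Type*} [TopologicalSpace X] {g : X × I → ℝ} (hg : Continuous g)
    (hb : ∀ p, g p ≤ 1) : Continuous (fun x => ⨆ t : I, g (x, t)) := by
  have hbdd : ∀ x : X, BddAbove (Set.range fun t : I => g (x, t)) := by
    intro x
    exact ⟨1, by rintro r ⟨t, rfl⟩; exact hb _⟩
  rw [continuous_iff_continuousAt]
  intro x₀
  obtain ⟨ts, -, hmax⟩ := (isCompact_univ (X := I)).exists_isMaxOn ⟨0, trivial⟩
    (hg.comp (continuous_const.prodMk continuous_id)).continuousOn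
  have hval : (⨆ t : I, g (x₀, t)) = g (x₀, ts) := by
    refine le_antisymm (ciSup_le fun t => hmax trivial) (le_ciSup (hbdd x₀) ts)
  rw [ContinuousAt, hval]
  rw [tendsto_order]
  constructor
  · intro b hb'
    have hcont : ContinuousAt (fun x => g (x, ts)) x₀ :=
      (hg.comp (continuous_id.prodMk continuous_const)).continuousAt
    have hev : ∀ᶠ x in nhds x₀, b < g (x, ts) := hcont.eventually_const_lt hb'
    filter_upwards [hev] with x hx
    exact hx.trans_le (le_ciSup (hbdd x) ts)
  · intro b hb'
    set mid := (g (x₀, ts) + b) / 2 with hmid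
    have h1 : g (x₀, ts) < mid := by rw [hmid]; linarith
    have h2 : mid < b := by rw [hmid]; linarith
    obtain ⟨W, hW, hxW, hWp⟩ := tube hg (V := {r : ℝ | r < mid}) isOpen_Iio
      (fun t => lt_of_le_of_lt (hmax trivial) h1)
    filter_upwards [hW.mem_nhds hxW] with x hx
    exact lt_of_le_of_lt (ciSup_le fun t => le_of_lt (hWp x hx t)) h2

lemma pI_one : pI 1 = 1 := by
  rw [pI, Set.projIcc_of_mem zero_le_one ⟨zero_le_one, le_rfl⟩]; rfl
lemma cl_ca {X : Type*} [TopologicalSpace X] {e : X → ℝ} {x : X}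
    (h : ContinuousAt e x) : ContinuousAt (fun x => cl (e x)) x :=
  ContinuousAt.comp (g := cl) (f := e) continuous_cl.continuousAt h

lemma min_cl_zero_left {r q : ℝ} (h : r ≤ 0) : min (cl r) (cl q) = 0 := by
  rw [cl_of_nonpos h]
  exact min_eq_left (cl_nonneg _)
lemma min_cl_zero_right {r q : ℝ} (h : q ≤ 0) : min (cl r) (cl q) = 0 := by
  rw [cl_of_nonpos h]
  exact min_eq_right (cl_nonneg _)

/-- Strøm-style data for a closed subset. -/
structure SD {X : Type} [TopologicalSpace X] (A : Set X) : Type where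
  u : X → ℝ
  φ : X × I → X
  hu : Continuous u
  hφ : Continuous φ
  hu0 : ∀ x, 0 ≤ u x
  hu1 : ∀ x, u x ≤ 1
  huA : ∀ x, u x = 0 ↔ x ∈ A
  hφ0 : ∀ x, φ (x, 0) = x
  hφA : ∀ a ∈ A, ∀ t : I, φ (a, t) = a
  hland : ∀ x, ∀ t : I, u x < (t : ℝ) → φ (x, t) ∈ A

theorem sd_of_cofib {X : Type} [TopologicalSpace X] {A : Set X}
    (hA : IsClosedCofibration A) : Nonempty (SD A) := by
  obtain ⟨hcl, hep⟩ := hA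
  set M : Set (X × I) := {p | p.2 = 0 ∨ p.1 ∈ A} with hM
  have hfc : Continuous (fun x : X => (⟨(x, 0), Or.inl rfl⟩ : ↥M)) :=
    Continuous.subtype_mk (continuous_id.prodMk continuous_const) _
  have hHc : Continuous (fun q : ↥A × I => (⟨(q.1.1, q.2), Or.inr q.1.2⟩ : ↥M)) :=
    Continuous.subtype_mk ((continuous_subtype_val.comp continuous_fst).prodMk
      continuous_snd) _
  obtain ⟨G, hG, hG0, hGA⟩ := hep (↥M) (fun x => ⟨(x, 0), Or.inl rfl⟩)
      (fun q => ⟨(q.1.1, q.2), Or.inr q.1.2⟩) hfc hHc (fun a => rfl)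
  set r : X × I → X × I := fun p => (G p : X × I) with hr
  have hrc : Continuous r := continuous_subtype_val.comp hG
  have hr0 : ∀ x : X, r (x, 0) = (x, 0) := by
    intro x
    rw [hr]
    simp only
    rw [hG0 x]
  have hrA : ∀ a ∈ A, ∀ t : I, r (a, t) = (a, t) := by
    intro a ha t
    have := hGA ⟨a, ha⟩ t
    rw [hr]
    simp only
    rw [this]
  have hrM : ∀ p : X × I, (r p).2 = 0 ∨ (r p).1 ∈ A := fun p => (G p).2
  -- the data
  set φ : X × I → X := fun p => (r p).1 with hφdef
  set g : X × I → ℝ := fun p => (p.2 : ℝ) - ((r p).2 : ℝ) with hgdef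
  have hgc : Continuous g := by
    apply Continuous.sub
    · exact continuous_subtype_val.comp continuous_snd
    · exact continuous_subtype_val.comp (continuous_snd.comp hrc)
  have hgb : ∀ p, g p ≤ 1 := by
    intro p
    have h1 : (p.2 : ℝ) ≤ 1 := p.2.2.2
    have h2 : (0 : ℝ) ≤ ((r p).2 : ℝ) := (r p).2.2.1
    simp only [hgdef]
    linarith
  set u : X → ℝ := fun x => ⨆ t : I, g (x, t) with hudef
  have hbdd : ∀ x : X, BddAbove (Set.range fun t : I => g (x, t)) :=
    fun x => ⟨1, by rintro q ⟨t, rfl⟩; exact hgb _⟩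
  have hule : ∀ x (t : I), g (x, t) ≤ u x := fun x t => le_ciSup (hbdd x) t
  have hu0 : ∀ x, 0 ≤ u x := by
    intro x
    have : g (x, 0) = 0 := by
      simp only [hgdef]
      rw [hr0 x]
      norm_num
    rw [← this]
    exact hule x 0
  have hu1 : ∀ x, u x ≤ 1 := fun x => ciSup_le fun t => hgb _
  have hland : ∀ x, ∀ t : I, u x < (t : ℝ) → φ (x, t) ∈ A := by
    intro x t ht
    have h1 : g (x, t) ≤ u x := hule x t
    have h2 : (0 : ℝ) < ((r (x, t)).2 : ℝ) := by
      simp only [hgdef] at h1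
      linarith
    rcases hrM (x, t) with h | h
    · rw [h] at h2
      norm_num at h2
    · exact h
  have huA : ∀ x, u x = 0 ↔ x ∈ A := by
    intro x
    constructor
    · intro hx
      -- φ(x, t) ∈ A for all t > 0, and φ(x, tₙ) → x
      have hmem : ∀ t : I, (0 : ℝ) < (t : ℝ) → φ (x, t) ∈ A := by
        intro t ht
        exact hland x t (by rw [hx]; exact ht)
      set seq : ℕ → I := fun n => Set.projIcc 0 1 zero_le_one (1 / (n + 1) : ℝ) with hseq
      have hseqpos : ∀ n, (0 : ℝ) < (seq n : ℝ) := by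
        intro n
        have hpos : (0 : ℝ) < 1 / (n + 1 : ℝ) := by positivity
        have hle : (1 / (n + 1 : ℝ)) ≤ 1 := by
          rw [div_le_one (by positivity)]
          linarith [Nat.cast_nonneg (α := ℝ) n]
        rw [hseq]
        simp only
        rw [Set.projIcc_of_mem zero_le_one ⟨le_of_lt hpos, hle⟩]
        exact hpos
      have hseqtend : Filter.Tendsto seq Filter.atTop (nhds 0) := by
        rw [hseq]
        have h1 : Filter.Tendsto (fun n : ℕ => (1 / (n + 1) : ℝ)) Filter.atTop (nhds 0) :=
          tendsto_one_div_add_atTop_nhds_zero_nat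
        have h2 := (continuous_projIcc (h := zero_le_one)).continuousAt (x := (0:ℝ)) |>.tendsto.comp h1
        rw [Set.projIcc_left] at h2
        exact h2
      have htend : Filter.Tendsto (fun n => φ (x, seq n)) Filter.atTop (nhds x) := by
        have hc : Continuous (fun t : I => φ (x, t)) :=
          (continuous_fst.comp hrc).comp (continuous_const.prodMk continuous_id)
        have := (hc.continuousAt (x := 0)).tendsto.comp hseqtend
        have hx0 : φ (x, 0) = x := by
          simp only [hφdef]
          rw [hr0 x]
        rw [hx0] at this
        exact this
      have : x ∈ closure A := by
        apply mem_closure_of_tendsto htend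
        filter_upwards with n
        exact hmem (seq n) (hseqpos n)
      rwa [hcl.closure_eq] at this
    · intro hx
      have : ∀ t : I, g (x, t) = 0 := by
        intro t
        simp only [hgdef]
        rw [hrA x hx t]
        ring
      rw [hudef]
      simp only
      rw [show (fun t : I => g (x, t)) = fun _ => (0:ℝ) from funext this]
      exact ciSup_const
  refine ⟨⟨u, φ, cont_sup hgc hgb, continuous_fst.comp hrc, hu0, hu1, huA, ?_, ?_, hland⟩⟩
  · intro x
    simp only [hφdef]
    rw [hr0 x]
  · intro a ha t
    simp only [hφdef]
    rw [hrA a ha t]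

/-- continuity on a union of two closed sets. -/
lemma continuousOn_union_closed {Z Y : Type*} [TopologicalSpace Z] [TopologicalSpace Y]
    {s t : Set Z} {k : Z → Y} (hs : IsClosed s) (ht : IsClosed t)
    (hks : ContinuousOn k s) (hkt : ContinuousOn k t) : ContinuousOn k (s ∪ t) := by
  have key : ∀ (s' t' : Set Z), IsClosed t' → ContinuousOn k s' → ContinuousOn k t' →
      ∀ p ∈ s', ContinuousWithinAt k (s' ∪ t') p := by
    intro s' t' ht' hks' hkt' p hp
    by_cases hpt : p ∈ t'
    · exact (hks' p hp).union (hkt' p hpt)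
    · apply (hks' p hp).union
      have h1 : p ∉ closure t' := by rwa [ht'.closure_eq]
      rw [mem_closure_iff_nhdsWithin_neBot] at h1
      have h2 : nhdsWithin p t' = ⊥ := by
        by_contra h3
        exact h1 ⟨h3⟩
      unfold ContinuousWithinAt
      rw [h2]
      exact Filter.tendsto_bot
  intro p hp
  rcases hp with hp | hp
  · exact key s t ht hks hkt p hp
  · rw [Set.union_comm]
    exact key t s hs hkt hks p hp

/-- halo data implies closed cofibration. -/
theorem cofib_of_ghc {X : Type} [TopologicalSpace X] {C : Set X} (hC : IsClosed C)
    {m : X → ℝ} {D : X × I → X} (hm : Continuous m) (hD : Continuous D)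
    (hm0 : ∀ x, 0 ≤ m x) (hmC : ∀ x, m x = 0 ↔ x ∈ C)
    (hD0 : ∀ x, D (x, 0) = x) (hDC : ∀ c ∈ C, ∀ t : I, D (c, t) = c)
    (hl : ∀ x, m x < 1 → D (x, 1) ∈ C) : IsClosedCofibration C := by
  refine ⟨hC, ?_⟩
  intro Y _ f H hf hH hH0
  haveI : ∀ x : X, Decidable (x ∈ C) := fun _ => Classical.propDecidable _
  -- the retraction
  set ξ : X × I → I := fun p =>
    if m p.1 = 0 then 0 else pI (min 1 ((p.2 : ℝ) / (4 * m p.1))) with hξ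
  set F : X × I → X := fun p => D (p.1, ξ p) with hF
  set τ : X × I → I := fun p => pI ((p.2 : ℝ) - 8 * m p.1) with hτ
  have hτc : Continuous τ := by
    apply continuous_pI.comp
    exact (continuous_subtype_val.comp continuous_snd).sub
      (continuous_const.mul (hm.comp continuous_fst))
  have hFc : Continuous F := by
    rw [continuous_iff_continuousAt]
    rintro ⟨x₀, t₀⟩
    by_cases hx : m x₀ = 0
    · -- x₀ ∈ C; use the tube lemma
      have hx₀C : x₀ ∈ C := (hmC x₀).1 hx
      have hval : F (x₀, t₀) = x₀ := by
        rw [hF]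
        simp only
        rw [hDC x₀ hx₀C]
      unfold ContinuousAt
      rw [hval]
      rw [(nhds_basis_opens x₀).tendsto_right_iff]
      rintro V ⟨hxV, hVopen⟩
      obtain ⟨W, hWopen, hx₀W, hWp⟩ := tube hD hVopen
        (fun t => by rw [hDC x₀ hx₀C t]; exact hxV)
      have hmem : W ×ˢ (univ : Set I) ∈ nhds (x₀, t₀) :=
        prod_mem_nhds (hWopen.mem_nhds hx₀W) Filter.univ_mem
      filter_upwards [hmem] with p hp
      exact hWp p.1 hp.1 (ξ p)
    · -- m x₀ > 0 : locally given by a continuous formula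
      have hopen : IsOpen {p : X × I | m p.1 ≠ 0} :=
        isOpen_compl_iff.mpr (isClosed_eq (hm.comp continuous_fst) continuous_const)
      have hmem : {p : X × I | m p.1 ≠ 0} ∈ nhds (x₀, t₀) := hopen.mem_nhds hx
      have hcongr : F =ᶠ[nhds (x₀, t₀)]
          (fun p => D (p.1, pI (min 1 ((p.2 : ℝ) / (4 * m p.1))))) := by
        filter_upwards [hmem] with p hp
        rw [hF]
        simp only [hξ]
        rw [if_neg hp]
      apply ContinuousAt.congr ?_ hcongr.symm
      have h1 : ContinuousAt (fun p : X × I => min 1 ((p.2 : ℝ) / (4 * m p.1)))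
          (x₀, t₀) := by
        apply Filter.Tendsto.min tendsto_const_nhds
        apply ContinuousAt.div
        · exact (continuous_subtype_val.comp continuous_snd).continuousAt
        · exact (continuous_const.mul (hm.comp continuous_fst)).continuousAt
        · simp only
          intro hcon
          rcases mul_eq_zero.mp hcon with h | h
          · norm_num at h
          · exact hx h
      have h2 : ContinuousAt
          (fun p : X × I => (p.1, pI (min 1 ((p.2 : ℝ) / (4 * m p.1))))) (x₀, t₀) :=
        ContinuousAt.prodMk continuous_fst.continuousAt
          (ContinuousAt.comp continuous_pI.continuousAt h1)
      exact ContinuousAt.comp hD.continuousAt h2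
  -- properties of the retraction R = (F, τ)
  have hτ0 : ∀ p : X × I, τ p ≠ 0 → 8 * m p.1 < (p.2 : ℝ) := by
    intro p hp
    by_contra hcon
    push_neg at hcon
    exact hp (by rw [hτ]; exact pI_of_nonpos (by linarith))
  have hFland : ∀ p : X × I, τ p ≠ 0 → F p ∈ C := by
    intro p hp
    have h8 : 8 * m p.1 < (p.2 : ℝ) := hτ0 p hp
    by_cases hz : m p.1 = 0
    · rw [hF]
      simp only [hξ]
      rw [if_pos hz, hD0]
      exact (hmC p.1).1 hz
    · have hmpos : 0 < m p.1 := lt_of_le_of_ne (hm0 p.1) (Ne.symm hz)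
      have hm1 : m p.1 < 1 := by
        have := p.2.2.2
        linarith
      have hdiv : (1 : ℝ) < (p.2 : ℝ) / (4 * m p.1) := by
        rw [lt_div_iff₀ (by linarith)]
        linarith
      have hmin : min 1 ((p.2 : ℝ) / (4 * m p.1)) = 1 := min_eq_left (le_of_lt hdiv)
      rw [hF]
      simp only [hξ]
      rw [if_neg hz, hmin, pI_one]
      exact hl p.1 hm1
  -- the extension
  set k : X × I → Y := fun p => if h : p.1 ∈ C then H (⟨p.1, h⟩, p.2) else f p.1 with hk
  set Mset : Set (X × I) := (C ×ˢ (univ : Set I)) ∪ ((univ : Set X) ×ˢ ({0} : Set I))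
    with hMset
  have hkC : ContinuousOn k (C ×ˢ (univ : Set I)) := by
    rw [continuousOn_iff_continuous_restrict]
    have : (C ×ˢ (univ : Set I)).domRestrict k =
        fun q : ↥(C ×ˢ (univ : Set I)) => H (⟨q.1.1, q.2.1⟩, q.1.2) := by
      funext q
      simp only [Set.domRestrict_apply, hk]
      rw [dif_pos (Set.mem_prod.mp q.2).1]
    rw [this]
    apply hH.comp
    apply Continuous.prodMk
    · exact Continuous.subtype_mk (continuous_fst.comp continuous_subtype_val) _
    · exact continuous_snd.comp continuous_subtype_val
  have hk0 : ContinuousOn k ((univ : Set X) ×ˢ ({0} : Set I)) := by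
    apply ContinuousOn.congr ((hf.comp continuous_fst).continuousOn)
    rintro ⟨x, t⟩ ⟨-, ht⟩
    have ht' : t = 0 := ht
    rw [hk]
    simp only
    by_cases hxC : x ∈ C
    · rw [dif_pos hxC, ht']
      exact hH0 ⟨x, hxC⟩
    · rw [dif_neg hxC]
      rfl
  have hkM : ContinuousOn k Mset :=
    continuousOn_union_closed (hC.prod isClosed_univ)
      (isClosed_univ.prod isClosed_singleton) hkC hk0
  have hrange : ∀ p : X × I, (F p, τ p) ∈ Mset := by
    intro p
    by_cases hτp : τ p = 0
    · right
      exact ⟨trivial, hτp⟩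
    · left
      exact ⟨hFland p hτp, trivial⟩
  refine ⟨fun p => k (F p, τ p), ?_, ?_, ?_⟩
  · exact hkM.comp_continuous (hFc.prodMk hτc) hrange
  · intro x
    show k (F (x, 0), τ (x, 0)) = f x
    have hF0 : F (x, 0) = x := by
      rw [hF]
      simp only [hξ]
      by_cases hx : m x = 0
      · rw [if_pos hx, hD0]
      · have h1 : (((0 : I) : ℝ) / (4 * m x)) = 0 := by
          norm_num
        rw [if_neg hx, h1, min_eq_right zero_le_one, pI_zero, hD0]
    have hτ0' : τ (x, 0) = 0 := by
      rw [hτ]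
      apply pI_of_nonpos
      have : ((0 : I) : ℝ) = 0 := rfl
      rw [this]
      have := hm0 x
      linarith
    rw [hF0, hτ0', hk]
    simp only
    by_cases hxC : x ∈ C
    · rw [dif_pos hxC]
      exact hH0 ⟨x, hxC⟩
    · rw [dif_neg hxC]
  · intro a t
    show k (F ((a : X), t), τ ((a : X), t)) = H (a, t)
    have hma : m (a : X) = 0 := (hmC _).2 a.2
    have hFa : F ((a : X), t) = (a : X) := by
      rw [hF]
      simp only [hξ]
      rw [if_pos hma, hD0]
    have hτa : τ ((a : X), t) = t := by
      rw [hτ]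
      simp only [hma]
      norm_num
      exact pI_coe_I t
    rw [hFa, hτa, hk]
    simp only
    rw [dif_pos a.2, Subtype.coe_eta]
theorem union_sd {X : Type} [TopologicalSpace X] {A B : Set X}
    (sa : SD A) (sb : SD B) (sc : SD (A ∩ B)) :
    ∃ (m : X → ℝ) (D : X × I → X), Continuous m ∧ Continuous D ∧ (∀ x, 0 ≤ m x) ∧
      (∀ x, m x = 0 ↔ x ∈ A ∪ B) ∧ (∀ x, D (x, 0) = x) ∧
      (∀ c ∈ A ∪ B, ∀ t : I, D (c, t) = c) ∧ (∀ x, m x < 1 → D (x, 1) ∈ A ∪ B) := by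
  classical
  set u := sa.u with hu_def
  set v := sb.u with hv_def
  set w := sc.u with hw_def
  have huA' : ∀ x, u x = 0 ↔ x ∈ A := sa.huA
  have hvB' : ∀ x, v x = 0 ↔ x ∈ B := sb.huA
  have hwC' : ∀ x, w x = 0 ↔ x ∈ A ∩ B := sc.huA
  have hu0' : ∀ x, 0 ≤ u x := sa.hu0
  have hv0' : ∀ x, 0 ≤ v x := sb.hu0
  have hw0' : ∀ x, 0 ≤ w x := sc.hu0
  have hu1' : ∀ x, u x ≤ 1 := sa.hu1
  have hv1' : ∀ x, v x ≤ 1 := sb.hu1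
  set s : X → ℝ := fun x => u x / (u x + v x) with hs_def
  set bχ : X → ℝ := fun x => min (cl (8 * s x - 2)) (cl (6 - 8 * s x)) with hbχ_def
  set cb : X → ℝ := fun x => min 1 (2 * w x * bχ x) with hcb_def
  set z : X → X := fun x => sc.φ (x, pI (cb x)) with hz_def
  set bB : X → ℝ := fun x => cl (4 * s x - 2) with hbB_def
  set bb : X → ℝ := fun x => min 1 (2 * v (z x) * bB x) with hbb_def
  set y : X → X := fun x => sb.φ (z x, pI (bb x)) with hy_def
  set bA : X → ℝ := fun x => cl (2 - 4 * s x) with hbA_def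
  set ab : X → ℝ := fun x => min 1 (2 * u (y x) * bA x) with hab_def
  set D : X × I → X := fun p =>
    sa.φ (sb.φ (sc.φ (p.1, pI ((p.2 : ℝ) * cb p.1)), pI ((p.2 : ℝ) * bb p.1)),
      pI ((p.2 : ℝ) * ab p.1)) with hD_def
  set qA : X → ℝ := fun x => cl (32 * s x - 11) with hqA_def
  set qχ : X → ℝ := fun x => max (cl (11 - 32 * s x)) (cl (32 * s x - 21)) with hqχ_def
  set qB : X → ℝ := fun x => cl (21 - 32 * s x) with hqB_def
  set mv : X → ℝ := fun x => min (u x) (v x) with hmv_def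
  set μa : X → ℝ := fun x => max (u (y x)) (max (qA x) (mv x)) with hμa_def
  set μb : X → ℝ := fun x => max (v (z x)) (max (qB x) (mv x)) with hμb_def
  set μc : X → ℝ := fun x => max (w x) (max (qχ x) (mv x)) with hμc_def
  set m : X → ℝ := fun x => min (μa x) (min (μb x) (μc x)) with hm_def
  -- basic positivity / bound facts
  have hbχ0 : ∀ x, 0 ≤ bχ x := fun x => le_min (cl_nonneg _) (cl_nonneg _)
  have hbχ1 : ∀ x, bχ x ≤ 1 := fun x => (min_le_left _ _).trans (cl_le_one _)
  have hcb0 : ∀ x, 0 ≤ cb x := fun x =>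
    le_min zero_le_one (mul_nonneg (mul_nonneg two_pos.le (hw0' x)) (hbχ0 x))
  have hcb1 : ∀ x, cb x ≤ 1 := fun x => min_le_left _ _
  have hbb0 : ∀ x, 0 ≤ bb x := fun x =>
    le_min zero_le_one (mul_nonneg (mul_nonneg two_pos.le (hv0' _)) (cl_nonneg _))
  have hbb1 : ∀ x, bb x ≤ 1 := fun x => min_le_left _ _
  have hab0 : ∀ x, 0 ≤ ab x := fun x =>
    le_min zero_le_one (mul_nonneg (mul_nonneg two_pos.le (hu0' _)) (cl_nonneg _))
  have hab1 : ∀ x, ab x ≤ 1 := fun x => min_le_left _ _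
  have hmv0 : ∀ x, 0 ≤ mv x := fun x => le_min (hu0' x) (hv0' x)
  -- s on A and on B \ A
  have hsA : ∀ x ∈ A, s x = 0 := by
    intro x hx
    rw [hs_def]
    simp only
    rw [(huA' x).2 hx, zero_div]
  have hsB : ∀ x, x ∈ B → x ∉ A → s x = 1 := by
    intro x hxB hxA
    have hv0 : v x = 0 := (hvB' x).2 hxB
    have hune : u x ≠ 0 := fun h => hxA ((huA' x).1 h)
    rw [hs_def]
    simp only
    rw [hv0, add_zero, div_self hune]
  -- cutoffs vanish appropriately on A ∪ B
  have hbχA : ∀ x ∈ A, bχ x = 0 := by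
    intro x hx
    rw [hbχ_def]
    simp only
    rw [hsA x hx]
    exact min_cl_zero_left (by norm_num)
  have hbχB : ∀ x, x ∈ B → x ∉ A → bχ x = 0 := by
    intro x hxB hxA
    rw [hbχ_def]
    simp only
    rw [hsB x hxB hxA]
    exact min_cl_zero_right (by norm_num)
  have hcbA : ∀ x ∈ A, cb x = 0 := by
    intro x hx
    rw [hcb_def]
    simp only
    rw [hbχA x hx, mul_zero]
    exact min_eq_right zero_le_one
  have hcbB : ∀ x, x ∈ B → x ∉ A → cb x = 0 := by
    intro x hxB hxA
    rw [hcb_def]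
    simp only
    rw [hbχB x hxB hxA, mul_zero]
    exact min_eq_right zero_le_one
  have hzA : ∀ x ∈ A, z x = x := by
    intro x hx
    rw [hz_def]
    simp only
    rw [hcbA x hx, pI_zero, sc.hφ0]
  have hzB : ∀ x, x ∈ B → x ∉ A → z x = x := by
    intro x hxB hxA
    rw [hz_def]
    simp only
    rw [hcbB x hxB hxA, pI_zero, sc.hφ0]
  have hbBA : ∀ x ∈ A, bB x = 0 := by
    intro x hx
    rw [hbB_def]
    simp only
    rw [hsA x hx]
    exact cl_of_nonpos (by norm_num)
  have hbbA : ∀ x ∈ A, bb x = 0 := by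
    intro x hx
    rw [hbb_def]
    simp only
    rw [hbBA x hx, mul_zero]
    exact min_eq_right zero_le_one
  have hyA : ∀ x ∈ A, y x = x := by
    intro x hx
    rw [hy_def]
    simp only
    rw [hbbA x hx, pI_zero, hzA x hx, sb.hφ0]
  have hbAB : ∀ x, x ∈ B → x ∉ A → bA x = 0 := by
    intro x hxB hxA
    rw [hbA_def]
    simp only
    rw [hsB x hxB hxA]
    exact cl_of_nonpos (by norm_num)
  have habB : ∀ x, x ∈ B → x ∉ A → ab x = 0 := by
    intro x hxB hxA
    rw [hab_def]
    simp only
    rw [hbAB x hxB hxA, mul_zero]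
    exact min_eq_right zero_le_one
  -- on B \ A : v (z x) = 0, so bb x = 0 and y x = x
  have hvzB : ∀ x, x ∈ B → x ∉ A → v (z x) = 0 := by
    intro x hxB hxA
    rw [hzB x hxB hxA]
    exact (hvB' x).2 hxB
  have hbbB : ∀ x, x ∈ B → x ∉ A → bb x = 0 := by
    intro x hxB hxA
    rw [hbb_def]
    simp only
    rw [hvzB x hxB hxA]
    norm_num
  have hyB : ∀ x, x ∈ B → x ∉ A → y x = x := by
    intro x hxB hxA
    rw [hy_def]
    simp only
    rw [hbbB x hxB hxA, pI_zero, hzB x hxB hxA, sb.hφ0]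
  -- continuity
  have hdenne : ∀ x, x ∉ A ∩ B → u x + v x ≠ 0 := by
    intro x hx hsum
    have h1 : u x = 0 := le_antisymm (by linarith [hv0' x]) (hu0' x)
    have h2 : v x = 0 := le_antisymm (by linarith [hu0' x]) (hv0' x)
    exact hx ⟨(huA' x).1 h1, (hvB' x).1 h2⟩
  have hsCA : ∀ x, x ∉ A ∩ B → ContinuousAt s x := by
    intro x hx
    apply ContinuousAt.div sa.hu.continuousAt (sa.hu.add sb.hu).continuousAt
    exact hdenne x hx
  have hbχCA : ∀ x, x ∉ A ∩ B → ContinuousAt bχ x := by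
    intro x hx
    apply Filter.Tendsto.min
    · exact cl_ca (((hsCA x hx).const_mul 8).sub continuousAt_const)
    · exact cl_ca (continuousAt_const.sub ((hsCA x hx).const_mul 8))
  have hcbc : Continuous cb := by
    apply cont_of_squeeze (R := A ∩ B) (bnd := fun x => 2 * w x)
      (continuous_const.mul sc.hu) hcb0
    · intro x
      rw [hcb_def]
      simp only
      refine (min_le_right _ _).trans ?_
      have := hbχ1 x
      nlinarith [hw0' x, hbχ0 x]
    · intro x hx
      rw [(hwC' x).2 hx, mul_zero]
    · intro x hx
      apply Filter.Tendsto.min continuousAt_const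
      exact ((continuous_const.mul sc.hu).continuousAt).mul (hbχCA x hx)
  have hzc : Continuous z := by
    rw [hz_def]
    exact sc.hφ.comp (continuous_id.prodMk (continuous_pI.comp hcbc))
  have hzAB : ∀ x ∈ A ∩ B, z x = x := fun x hx => hzA x hx.1
  have hbBCA : ∀ x, x ∉ A ∩ B → ContinuousAt bB x := by
    intro x hx
    exact cl_ca (((hsCA x hx).const_mul 4).sub continuousAt_const)
  have hbbc : Continuous bb := by
    apply cont_of_squeeze (R := A ∩ B) (bnd := fun x => 2 * v (z x))
      (continuous_const.mul (sb.hu.comp hzc)) hbb0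
    · intro x
      rw [hbb_def]
      simp only
      refine (min_le_right _ _).trans ?_
      nlinarith [cl_le_one (4 * s x - 2), cl_nonneg (4 * s x - 2), hv0' (z x)]
    · intro x hx
      rw [hzAB x hx, (hvB' x).2 hx.2, mul_zero]
    · intro x hx
      apply Filter.Tendsto.min continuousAt_const
      exact ((continuous_const.mul (sb.hu.comp hzc)).continuousAt).mul (hbBCA x hx)
  have hyc : Continuous y := by
    rw [hy_def]
    exact sb.hφ.comp (hzc.prodMk (continuous_pI.comp hbbc))
  have hyAB : ∀ x ∈ A ∩ B, y x = x := fun x hx => hyA x hx.1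
  have hbACA : ∀ x, x ∉ A ∩ B → ContinuousAt bA x := by
    intro x hx
    exact cl_ca (continuousAt_const.sub ((hsCA x hx).const_mul 4))
  have habc : Continuous ab := by
    apply cont_of_squeeze (R := A ∩ B) (bnd := fun x => 2 * u (y x))
      (continuous_const.mul (sa.hu.comp hyc)) hab0
    · intro x
      rw [hab_def]
      simp only
      refine (min_le_right _ _).trans ?_
      nlinarith [cl_le_one (2 - 4 * s x), cl_nonneg (2 - 4 * s x), hu0' (y x)]
    · intro x hx
      rw [hyAB x hx, (huA' x).2 hx.1, mul_zero]
    · intro x hx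
      apply Filter.Tendsto.min continuousAt_const
      exact ((continuous_const.mul (sa.hu.comp hyc)).continuousAt).mul (hbACA x hx)
  have hDc : Continuous D := by
    rw [hD_def]
    apply sa.hφ.comp
    apply Continuous.prodMk
    · apply sb.hφ.comp
      apply Continuous.prodMk
      · apply sc.hφ.comp
        apply Continuous.prodMk continuous_fst
        exact continuous_pI.comp ((continuous_subtype_val.comp continuous_snd).mul
          (hcbc.comp continuous_fst))
      · exact continuous_pI.comp ((continuous_subtype_val.comp continuous_snd).mul
          (hbbc.comp continuous_fst))
    · exact continuous_pI.comp ((continuous_subtype_val.comp continuous_snd).mul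
        (habc.comp continuous_fst))
  -- m : positivity, continuity
  have hμa0 : ∀ x, 0 ≤ μa x := fun x => (hu0' (y x)).trans (le_max_left _ _)
  have hμb0 : ∀ x, 0 ≤ μb x := fun x => (hv0' (z x)).trans (le_max_left _ _)
  have hμc0 : ∀ x, 0 ≤ μc x := fun x => (hw0' x).trans (le_max_left _ _)
  have hm0 : ∀ x, 0 ≤ m x := fun x => le_min (hμa0 x) (le_min (hμb0 x) (hμc0 x))
  have hqcover : ∀ x, qA x = 0 ∨ qχ x = 0 ∨ qB x = 0 := by
    intro x
    rcases le_or_gt (s x) (11/32) with h | h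
    · left
      rw [hqA_def]
      simp only
      exact cl_of_nonpos (by linarith)
    · rcases le_or_gt (s x) (21/32) with h2 | h2
      · right; left
        rw [hqχ_def]
        simp only
        rw [cl_of_nonpos (by linarith), cl_of_nonpos (by linarith)]
        norm_num
      · right; right
        rw [hqB_def]
        simp only
        exact cl_of_nonpos (by linarith)
  have hmE : ∀ x, m x ≤ max (max (u (y x)) (v (z x))) (max (w x) (mv x)) := by
    intro x
    rcases hqcover x with h | h | h
    · refine (min_le_left _ _).trans ?_
      rw [hμa_def]
      simp only
      rw [h, max_eq_right (hmv0 x)]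
      apply max_le
      · exact le_max_of_le_left (le_max_left _ _)
      · exact le_max_of_le_right (le_max_right _ _)
    · refine ((min_le_right _ _).trans (min_le_right _ _)).trans ?_
      rw [hμc_def]
      simp only
      rw [h, max_eq_right (hmv0 x)]
      apply max_le
      · exact le_max_of_le_right (le_max_left _ _)
      · exact le_max_of_le_right (le_max_right _ _)
    · refine ((min_le_right _ _).trans (min_le_left _ _)).trans ?_
      rw [hμb_def]
      simp only
      rw [h, max_eq_right (hmv0 x)]
      apply max_le
      · exact le_max_of_le_left (le_max_right _ _)
      · exact le_max_of_le_right (le_max_right _ _)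
  have hmvc : Continuous mv := sa.hu.min sb.hu
  have hmc : Continuous m := by
    apply cont_of_squeeze (R := A ∩ B)
      (bnd := fun x => max (max (u (y x)) (v (z x))) (max (w x) (mv x)))
      (((sa.hu.comp hyc).max (sb.hu.comp hzc)).max (sc.hu.max hmvc)) hm0 hmE
    · intro x hx
      rw [hyAB x hx, hzAB x hx, (huA' x).2 hx.1, (hvB' x).2 hx.2, (hwC' x).2 hx]
      rw [hmv_def]
      simp only
      rw [(huA' x).2 hx.1, (hvB' x).2 hx.2]
      norm_num
    · intro x hx
      have hqACA : ContinuousAt qA x :=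
        cl_ca (((hsCA x hx).const_mul 32).sub continuousAt_const)
      have hqχCA : ContinuousAt qχ x := Filter.Tendsto.max
        (cl_ca (continuousAt_const.sub ((hsCA x hx).const_mul 32)))
        (cl_ca (((hsCA x hx).const_mul 32).sub continuousAt_const))
      have hqBCA : ContinuousAt qB x :=
        cl_ca (continuousAt_const.sub ((hsCA x hx).const_mul 32))
      apply Filter.Tendsto.min
      · exact Filter.Tendsto.max ((sa.hu.comp hyc).continuousAt)
          (Filter.Tendsto.max hqACA hmvc.continuousAt)
      apply Filter.Tendsto.min
      · exact Filter.Tendsto.max ((sb.hu.comp hzc).continuousAt)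
          (Filter.Tendsto.max hqBCA hmvc.continuousAt)
      · exact Filter.Tendsto.max (sc.hu.continuousAt)
          (Filter.Tendsto.max hqχCA hmvc.continuousAt)
  -- zero set of m
  have hmC : ∀ x, m x = 0 ↔ x ∈ A ∪ B := by
    intro x
    constructor
    · intro h
      have h1 : mv x ≤ μa x := le_max_of_le_right (le_max_right _ _)
      have h2 : mv x ≤ μb x := le_max_of_le_right (le_max_right _ _)
      have h3 : mv x ≤ μc x := le_max_of_le_right (le_max_right _ _)
      have h4 : mv x ≤ m x := le_min h1 (le_min h2 h3)
      have h5 : mv x = 0 := le_antisymm (h ▸ h4) (hmv0 x)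
      rw [hmv_def] at h5
      simp only at h5
      rcases le_total (u x) (v x) with hle | hle
      · rw [min_eq_left hle] at h5
        exact Or.inl ((huA' x).1 h5)
      · rw [min_eq_right hle] at h5
        exact Or.inr ((hvB' x).1 h5)
    · intro hx
      by_cases hxA : x ∈ A
      · have hqA0 : qA x = 0 := by
          rw [hqA_def]
          simp only
          rw [hsA x hxA]
          exact cl_of_nonpos (by norm_num)
        have hmv0' : mv x = 0 := by
          rw [hmv_def]
          simp only
          rw [(huA' x).2 hxA]
          exact min_eq_left (hv0' x)
        have hμa0' : μa x = 0 := by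
          rw [hμa_def]
          simp only
          rw [hyA x hxA, (huA' x).2 hxA, hqA0, hmv0']
          norm_num
        exact le_antisymm ((min_le_left _ _).trans_eq hμa0') (hm0 x)
      · have hxB : x ∈ B := hx.resolve_left hxA
        have hqB0 : qB x = 0 := by
          rw [hqB_def]
          simp only
          rw [hsB x hxB hxA]
          exact cl_of_nonpos (by norm_num)
        have hmv0' : mv x = 0 := by
          rw [hmv_def]
          simp only
          rw [(hvB' x).2 hxB]
          exact min_eq_right (hu0' x)
        have hμb0' : μb x = 0 := by
          rw [hμb_def]
          simp only
          rw [hvzB x hxB hxA, hqB0, hmv0']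
          norm_num
        refine le_antisymm (((min_le_right _ _).trans (min_le_left _ _)).trans_eq hμb0')
          (hm0 x)
  -- D is a homotopy rel A ∪ B starting at the identity
  have hD0 : ∀ x, D (x, 0) = x := by
    intro x
    rw [hD_def]
    simp only
    rw [show ((0 : I) : ℝ) = 0 from rfl]
    simp only [zero_mul, pI_zero]
    rw [sc.hφ0, sb.hφ0, sa.hφ0]
  have hDC : ∀ c ∈ A ∪ B, ∀ t : I, D (c, t) = c := by
    intro c hc t
    by_cases hcA : c ∈ A
    · rw [hD_def]
      simp only
      rw [hcbA c hcA, hbbA c hcA, mul_zero, pI_zero, sc.hφ0, sb.hφ0]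
      exact sa.hφA c hcA _
    · have hcB : c ∈ B := hc.resolve_left hcA
      rw [hD_def]
      simp only
      rw [hcbB c hcB hcA, mul_zero, pI_zero, sc.hφ0]
      rw [sb.hφA c hcB _]
      rw [habB c hcB hcA, mul_zero, pI_zero, sa.hφ0]
  -- landing
  have hD1 : ∀ x, D (x, 1) = sa.φ (y x, pI (ab x)) := by
    intro x
    rw [hD_def]
    simp only [hy_def, hz_def]
    rw [show ((1 : I) : ℝ) = 1 from rfl]
    simp only [one_mul]
  have hland : ∀ x, m x < 1 → D (x, 1) ∈ A ∪ B := by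
    intro x hmx
    by_cases hxAB : x ∈ A ∪ B
    · rw [hDC x hxAB 1]
      exact hxAB
    · have hxA : x ∉ A := fun h => hxAB (Or.inl h)
      have hxB : x ∉ B := fun h => hxAB (Or.inr h)
      rw [hD1 x]
      have hcase : μa x < 1 ∨ μb x < 1 ∨ μc x < 1 := by
        rcases min_lt_iff.1 hmx with h | h
        · exact Or.inl h
        · rcases min_lt_iff.1 h with h2 | h2
          · exact Or.inr (Or.inl h2)
          · exact Or.inr (Or.inr h2)
      rcases hcase with hμ | hμ | hμ
      · -- the φ-mechanism lands in A
        rw [hμa_def] at hμ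
        simp only at hμ
        rcases max_lt_iff.1 hμ with ⟨huy1, hrest⟩
        have hqA1 : qA x < 1 := (le_max_left _ _).trans_lt hrest
        have hs38 : s x < 3/8 := by
          rw [hqA_def] at hqA1
          simp only at hqA1
          have := lt_one_of_cl_lt_one hqA1
          linarith
        have hbA2 : 1/2 < bA x := by
          rw [hbA_def]
          simp only
          exact half_lt_cl (by linarith)
        by_cases huy : u (y x) = 0
        · have hyAmem : y x ∈ A := (huA' (y x)).1 huy
          rw [sa.hφA (y x) hyAmem _]
          exact Or.inl hyAmem
        · have huypos : 0 < u (y x) := lt_of_le_of_ne (hu0' (y x)) (Ne.symm huy)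
          have habgt : u (y x) < ab x := by
            rw [hab_def]
            simp only
            apply lt_min huy1
            nlinarith
          apply Or.inl
          apply sa.hland (y x) (pI (ab x))
          rwa [pI_coe (hab0 x) (hab1 x)]
      · -- the ψ-mechanism lands in B
        rw [hμb_def] at hμ
        simp only at hμ
        rcases max_lt_iff.1 hμ with ⟨hvz1, hrest⟩
        have hqB1 : qB x < 1 := (le_max_left _ _).trans_lt hrest
        have hs58 : 5/8 < s x := by
          rw [hqB_def] at hqB1
          simp only at hqB1
          have := lt_one_of_cl_lt_one hqB1
          linarith
        have hbA0 : bA x = 0 := by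
          rw [hbA_def]
          simp only
          exact cl_of_nonpos (by linarith)
        have hab0' : ab x = 0 := by
          rw [hab_def]
          simp only
          rw [hbA0, mul_zero]
          exact min_eq_right zero_le_one
        rw [hab0', pI_zero, sa.hφ0]
        have hbB2 : 1/2 < bB x := by
          rw [hbB_def]
          simp only
          exact half_lt_cl (by linarith)
        by_cases hvz : v (z x) = 0
        · have hzBmem : z x ∈ B := (hvB' (z x)).1 hvz
          have hbb0' : bb x = 0 := by
            rw [hbb_def]
            simp only
            rw [hvz]
            norm_num
          rw [hy_def]
          simp only
          rw [hbb0', pI_zero, sb.hφ0]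
          exact Or.inr hzBmem
        · have hvzpos : 0 < v (z x) := lt_of_le_of_ne (hv0' (z x)) (Ne.symm hvz)
          have hbbgt : v (z x) < bb x := by
            rw [hbb_def]
            simp only
            apply lt_min hvz1
            nlinarith
          apply Or.inr
          rw [hy_def]
          simp only
          apply sb.hland (z x) (pI (bb x))
          rwa [pI_coe (hbb0 x) (hbb1 x)]
      · -- the χ-mechanism lands in A ∩ B
        rw [hμc_def] at hμ
        simp only at hμ
        rcases max_lt_iff.1 hμ with ⟨hw1, hrest⟩
        have hqχ1 : qχ x < 1 := (le_max_left _ _).trans_lt hrest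
        rw [hqχ_def] at hqχ1
        simp only at hqχ1
        rcases max_lt_iff.1 hqχ1 with ⟨hq1, hq2⟩
        have hs1 : 5/16 < s x := by
          have := lt_one_of_cl_lt_one hq1
          linarith
        have hs2 : s x < 11/16 := by
          have := lt_one_of_cl_lt_one hq2
          linarith
        have hbχ2 : 1/2 < bχ x := by
          rw [hbχ_def]
          simp only
          exact lt_min (half_lt_cl (by linarith)) (half_lt_cl (by linarith))
        have hwpos : 0 < w x := by
          have hne : w x ≠ 0 := fun h => hxA ((hwC' x).1 h).1
          exact lt_of_le_of_ne (hw0' x) (Ne.symm hne)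
        have hcbgt : w x < cb x := by
          rw [hcb_def]
          simp only
          apply lt_min hw1
          nlinarith
        have hzmem : z x ∈ A ∩ B := by
          rw [hz_def]
          simp only
          apply sc.hland x (pI (cb x))
          rwa [pI_coe (hcb0 x) (hcb1 x)]
        have hbb0' : bb x = 0 := by
          rw [hbb_def]
          simp only
          rw [(hvB' (z x)).2 hzmem.2]
          norm_num
        have hyz : y x = z x := by
          rw [hy_def]
          simp only
          rw [hbb0', pI_zero, sb.hφ0]
        rw [hyz, sa.hφA (z x) hzmem.1 _]
        exact Or.inl hzmem.1
  exact ⟨m, D, hmc, hDc, hm0, hmC, hD0, hDC, hland⟩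


end Lillig
end

/-- Lillig's union theorem for cofibrations: if `A`, `B` and `A ∩ B` are closed
cofibrations in `X`, then so is `A ∪ B`. -/
theorem union_of_closedCofibrations {X : Type} [TopologicalSpace X] (A B : Set X)
    (hA : IsClosedCofibration A) (hB : IsClosedCofibration B)
    (hAB : IsClosedCofibration (A ∩ B)) : IsClosedCofibration (A ∪ B) := by
  obtain ⟨sa⟩ := Lillig.sd_of_cofib hA
  obtain ⟨sb⟩ := Lillig.sd_of_cofib hB
  obtain ⟨sc⟩ := Lillig.sd_of_cofib hAB
  obtain ⟨m, D, hmc, hDc, hm0, hmC, hD0, hDC, hland⟩ := Lillig.union_sd sa sb sc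
  exact Lillig.cofib_of_ghc (hA.1.union hB.1) hmc hDc hm0 hmC hD0 hDC hland
end

section
/- Let $X_1 \leftarrow X_0 \to X_2$ be a diagram of spaces over a fixed space $Y$ (i.e. each $X_i$ has a map to $Y$ commuting with the diagram maps). Let $F_i$ denote the homotopy fiber of $X_i \to Y$ over a chosen basepoint of $Y$, and let $F$ denote the homotopy fiber of the canonical map $\mathrm{hocolim}(X_1 \leftarrow X_0 \to X_2) \to Y$. Then the canonical map $\mathrm{hocolim}(F_1 \leftarrow F_0 \to F_2) \to F$ is a weak homotopy equivalence (Puppe's theorem for homotopy pushouts). -/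
open scoped Topology Topology.Homotopy unitInterval

noncomputable section

/-- Pushforward of a generalized loop along a continuous map. -/
def GenLoop.push {N X Y : Type} [TopologicalSpace X] [TopologicalSpace Y]
    {x : X} (g : C(X, Y)) (γ : Ω^ N X x) : Ω^ N Y (g x) :=
  ⟨g.comp γ.1, fun y hy => by show g (γ.1 y) = g x; rw [γ.2 y hy]⟩

/-- The induced map on `n`-th homotopy groups. -/
def piMap {X Y : Type} [TopologicalSpace X] [TopologicalSpace Y]
    (n : ℕ) (g : C(X, Y)) (x : X) :
    HomotopyGroup (Fin n) X x → HomotopyGroup (Fin n) Y (g x) :=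
  Quotient.map (GenLoop.push g) fun _ _ h => h.map fun F => F.compContinuousMap g

/-- The induced map on path components. -/
def zerothMap {X Y : Type} [TopologicalSpace X] [TopologicalSpace Y]
    (g : C(X, Y)) : ZerothHomotopy X → ZerothHomotopy Y :=
  Quotient.map g fun _ _ h => h.map g.continuous

/-- A continuous map is a weak homotopy equivalence if it induces a bijection on path
components and on all homotopy groups at all basepoints. -/
def IsWeakHomotopyEquiv {X Y : Type} [TopologicalSpace X] [TopologicalSpace Y]
    (g : C(X, Y)) : Prop :=
  Function.Bijective (zerothMap g) ∧
    ∀ (n : ℕ) (x : X), 0 < n → Function.Bijective (piMap n g x)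

/-- The gluing relation of the double mapping cylinder of `f : X₀ → X₁`, `g : X₀ → X₂`. -/
inductive CylRel {X₀ X₁ X₂ : Type} [TopologicalSpace X₀] (f : X₀ → X₁) (g : X₀ → X₂) :
    (X₁ ⊕ X₀ × I) ⊕ X₂ → (X₁ ⊕ X₀ × I) ⊕ X₂ → Prop
  | zero (x : X₀) : CylRel f g (.inl (.inr (x, 0))) (.inl (.inl (f x)))
  | one (x : X₀) : CylRel f g (.inl (.inr (x, 1))) (.inr (g x))

/-- The double mapping cylinder (homotopy pushout) of `f : X₀ → X₁` and `g : X₀ → X₂`. -/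
def DMC {X₀ X₁ X₂ : Type} [TopologicalSpace X₀] [TopologicalSpace X₁] [TopologicalSpace X₂]
    (f : X₀ → X₁) (g : X₀ → X₂) : Type :=
  Quot (CylRel f g)

instance {X₀ X₁ X₂ : Type} [TopologicalSpace X₀] [TopologicalSpace X₁] [TopologicalSpace X₂]
    (f : X₀ → X₁) (g : X₀ → X₂) : TopologicalSpace (DMC f g) :=
  inferInstanceAs (TopologicalSpace (Quot (CylRel f g)))

/-- The homotopy fiber of `p : X → Y` over `y₀`: pairs of a point of `X` and a path from
its image to `y₀`. -/
def HFib {X Y : Type} [TopologicalSpace X] [TopologicalSpace Y] (p : X → Y) (y₀ : Y) :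
    Type :=
  {z : X × C(I, Y) // z.2 0 = p z.1 ∧ z.2 1 = y₀}

instance {X Y : Type} [TopologicalSpace X] [TopologicalSpace Y] (p : X → Y) (y₀ : Y) :
    TopologicalSpace (HFib p y₀) :=
  inferInstanceAs (TopologicalSpace {z : X × C(I, Y) // z.2 0 = p z.1 ∧ z.2 1 = y₀})

end

namespace PuppeAux
open Set Filter Topology


variable {α β γ Z : Type*} [TopologicalSpace α] [TopologicalSpace β] [TopologicalSpace γ]
  [TopologicalSpace Z]

/-- ContinuousOn through an open embedding image. -/
lemma continuousOn_image_of_isOpenEmbedding {e : α → β} (he : Topology.IsEmbedding e)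
    {h : β → γ} {t : Set α} (hc : ContinuousOn (h ∘ e) t) : ContinuousOn h (e '' t) := by
  rintro x ⟨a, ha, rfl⟩
  have := hc a ha
  rw [ContinuousWithinAt, ← he.map_nhdsWithin_eq, tendsto_map'_iff]
  exact this

lemma continuousOn_sum_elim {F : α → γ} {G : β → γ} {s : Set (α ⊕ β)}
    (hF : ContinuousOn F (Sum.inl ⁻¹' s)) (hG : ContinuousOn G (Sum.inr ⁻¹' s)) :
    ContinuousOn (Sum.elim F G) s := by
  intro x hx
  cases x with
  | inl a =>
      have h1 : ContinuousOn (Sum.elim F G) (Sum.inl '' (Sum.inl ⁻¹' s)) := by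
        apply continuousOn_image_of_isOpenEmbedding Topology.IsEmbedding.inl
        simpa using hF
      have h2 := h1 (Sum.inl a) ⟨a, hx, rfl⟩
      rw [Set.image_preimage_eq_inter_range] at h2
      exact h2.mono_of_mem_nhdsWithin
        (inter_mem_nhdsWithin _ (IsOpen.mem_nhds isOpen_range_inl ⟨a, rfl⟩))
  | inr b =>
      have h1 : ContinuousOn (Sum.elim F G) (Sum.inr '' (Sum.inr ⁻¹' s)) := by
        apply continuousOn_image_of_isOpenEmbedding Topology.IsEmbedding.inr
        simpa using hG
      have h2 := h1 (Sum.inr b) ⟨b, hx, rfl⟩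
      rw [Set.image_preimage_eq_inter_range] at h2
      exact h2.mono_of_mem_nhdsWithin
        (inter_mem_nhdsWithin _ (IsOpen.mem_nhds isOpen_range_inr ⟨b, rfl⟩))


variable {A Z α : Type*} [TopologicalSpace A] [TopologicalSpace Z] [TopologicalSpace α]

lemma quotLift_continuousOn {r : A → A → Prop} {f : A → Z}
    (hr : ∀ a b, r a b → f a = f b) {s : Set (Quot r)} (hs : IsClosed s)
    (hf : ContinuousOn f (Quot.mk r ⁻¹' s)) : ContinuousOn (Quot.lift f hr) s := by
  rw [continuousOn_iff_continuous_restrict]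
  rw [continuous_iff_isClosed]
  intro K hK
  have hC : IsClosed ((Quot.mk r ⁻¹' s) ∩ f ⁻¹' K) :=
    hf.preimage_isClosed_of_isClosed (hs.preimage continuous_quot_mk) hK
  have hC2 : IsClosed (s ∩ (Quot.lift f hr) ⁻¹' K) := by
    rw [← isQuotientMap_quot_mk.isClosed_preimage]
    exact hC
  have : Set.restrict s (Quot.lift f hr) ⁻¹' K = Subtype.val ⁻¹' (s ∩ (Quot.lift f hr) ⁻¹' K) := by
    ext w; simp [Set.restrict, w.2]
  rw [show s.domRestrict (Quot.lift f hr) = s.restrict (Quot.lift f hr) from rfl, this]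
  exact hC2.preimage continuous_subtype_val

lemma continuous_of_three_closed {f : α → Z} {s t u : Set α}
    (hs : IsClosed s) (ht : IsClosed t) (hu : IsClosed u)
    (hcover : s ∪ t ∪ u = univ)
    (h1 : ContinuousOn f s) (h2 : ContinuousOn f t) (h3 : ContinuousOn f u) :
    Continuous f := by
  rw [continuous_iff_isClosed]
  intro K hK
  have : f ⁻¹' K = (s ∩ f ⁻¹' K) ∪ (t ∩ f ⁻¹' K) ∪ (u ∩ f ⁻¹' K) := by
    rw [← Set.union_inter_distrib_right, ← Set.union_inter_distrib_right, hcover, univ_inter]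
  rw [this]
  exact ((h1.preimage_isClosed_of_isClosed hs hK).union
    (h2.preimage_isClosed_of_isClosed ht hK)).union (h3.preimage_isClosed_of_isClosed hu hK)


noncomputable def pr : ℝ → I := Set.projIcc 0 1 zero_le_one

lemma continuous_pr : Continuous pr := continuous_projIcc

lemma pr_coe (t : I) : pr (t : ℝ) = t := Set.projIcc_val zero_le_one t

lemma pr_zero : pr 0 = 0 := Set.projIcc_left _

lemma pr_one : pr 1 = 1 := Set.projIcc_right _

section Cyl

variable {W₀ W₁ W₂ : Type} [TopologicalSpace W₀] [TopologicalSpace W₁] [TopologicalSpace W₂]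
  (f : W₀ → W₁) (g : W₀ → W₂)

def tau : DMC f g → ℝ :=
  Quot.lift (Sum.elim (Sum.elim (fun _ => (0:ℝ)) (fun p => (p.2 : ℝ))) fun _ => (1:ℝ))
    (by rintro a b (⟨x⟩|⟨x⟩) <;> simp)

lemma continuous_tau : Continuous (tau f g) :=
  continuous_quot_lift _ (((continuous_const.sumElim
    (continuous_subtype_val.comp continuous_snd)).sumElim continuous_const))

@[simp] lemma tau_mk₁ (x : W₁) : tau f g (Quot.mk _ (.inl (.inl x))) = 0 := rfl
@[simp] lemma tau_mk₀ (x : W₀) (t : I) : tau f g (Quot.mk _ (.inl (.inr (x, t)))) = t := rfl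
@[simp] lemma tau_mk₂ (x : W₂) : tau f g (Quot.mk _ (.inr x)) = 1 := rfl

variable (t₀ : ℝ)

def sig (r : ℝ) : ℝ := max 0 (min 1 (2*r - t₀))

lemma continuous_sig : Continuous (sig t₀) := by unfold sig; fun_prop

def rho (s : I) (t : ℝ) : ℝ := (1 - (s:ℝ)) * t + s * sig t₀ t

lemma sig_zero (h0 : 0 ≤ t₀) : sig t₀ 0 = 0 := by
  unfold sig; rw [max_eq_left]; exact min_le_of_right_le (by linarith)

lemma sig_one (h1 : t₀ ≤ 1) : sig t₀ 1 = 1 := by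
  unfold sig; rw [min_eq_left (by linarith), max_eq_right (by norm_num)]

lemma sig_self (h0 : 0 ≤ t₀) (h1 : t₀ ≤ 1) : sig t₀ t₀ = t₀ := by
  unfold sig
  have h : 2*t₀ - t₀ = t₀ := by ring
  rw [h, min_eq_right h1, max_eq_right h0]

lemma rho_zero_right (h0 : 0 ≤ t₀) (s : I) : rho t₀ s 0 = 0 := by
  unfold rho; rw [sig_zero t₀ h0]; ring

lemma rho_one_right (h1 : t₀ ≤ 1) (s : I) : rho t₀ s 1 = 1 := by
  unfold rho; rw [sig_one t₀ h1]; ring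

lemma rho_self (h0 : 0 ≤ t₀) (h1 : t₀ ≤ 1) (s : I) : rho t₀ s t₀ = t₀ := by
  unfold rho; rw [sig_self t₀ h0 h1]; ring

lemma rho_zero_left (t : ℝ) : rho t₀ 0 t = t := by
  unfold rho; simp

lemma rho_one_left (t : ℝ) : rho t₀ 1 t = sig t₀ t := by
  unfold rho; simp

noncomputable def cylFam1 : C(W₁, C(I, DMC f g)) :=
  ContinuousMap.curry ⟨fun p => Quot.mk _ (.inl (.inl p.1)), by
    exact continuous_quot_mk.comp (continuous_inl.comp (continuous_inl.comp continuous_fst))⟩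

noncomputable def cylFam2 : C(W₂, C(I, DMC f g)) :=
  ContinuousMap.curry ⟨fun p => Quot.mk _ (.inr p.1), by
    exact continuous_quot_mk.comp (continuous_inr.comp continuous_fst)⟩

noncomputable def cylFam0 : C(W₀ × I, C(I, DMC f g)) :=
  ContinuousMap.curry ⟨fun p => Quot.mk _ (.inl (.inr (p.1.1, pr (rho t₀ p.2 (p.1.2 : ℝ))))), by
    apply continuous_quot_mk.comp
    apply continuous_inl.comp
    apply continuous_inr.comp
    apply (continuous_fst.fst.prodMk (continuous_pr.comp _))
    unfold rho
    have : Continuous (sig t₀) := continuous_sig t₀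
    fun_prop⟩

@[simp] lemma cylFam0_apply (p : W₀ × I) (s : I) :
    cylFam0 f g t₀ p s = Quot.mk _ (.inl (.inr (p.1, pr (rho t₀ s (p.2 : ℝ))))) := rfl

@[simp] lemma cylFam1_apply (x : W₁) (s : I) :
    cylFam1 f g x s = Quot.mk (CylRel f g) (.inl (.inl x)) := rfl

@[simp] lemma cylFam2_apply (x : W₂) (s : I) :
    cylFam2 f g x s = Quot.mk (CylRel f g) (.inr x) := rfl

noncomputable def cyl (h0 : 0 ≤ t₀) (h1 : t₀ ≤ 1) : DMC f g → C(I, DMC f g) :=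
  Quot.lift (Sum.elim (Sum.elim (cylFam1 f g) (cylFam0 f g t₀)) (cylFam2 f g))
    (by
      rintro a b (⟨x⟩|⟨x⟩) <;> ext s <;>
        simp only [Sum.elim_inl, Sum.elim_inr, cylFam0_apply, cylFam1_apply, cylFam2_apply]
      · rw [show (((0:I)):ℝ) = (0:ℝ) from rfl, rho_zero_right t₀ h0, pr_zero]
        exact Quot.sound (CylRel.zero x)
      · rw [show (((1:I)):ℝ) = (1:ℝ) from rfl, rho_one_right t₀ h1, pr_one]
        exact Quot.sound (CylRel.one x))

variable {t₀ : ℝ} (h0 : 0 ≤ t₀) (h1 : t₀ ≤ 1)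

lemma continuous_cyl : Continuous (cyl f g t₀ h0 h1) :=
  continuous_quot_lift _ (((cylFam1 f g).continuous.sumElim
    (cylFam0 f g t₀).continuous).sumElim (cylFam2 f g).continuous)

@[simp] lemma cyl_mk₁ (x : W₁) (s : I) :
    cyl f g t₀ h0 h1 (Quot.mk _ (.inl (.inl x))) s = Quot.mk _ (.inl (.inl x)) := rfl

@[simp] lemma cyl_mk₂ (x : W₂) (s : I) :
    cyl f g t₀ h0 h1 (Quot.mk _ (.inr x)) s = Quot.mk _ (.inr x) := rfl

lemma cyl_mk₀ (x : W₀) (t : I) (s : I) :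
    cyl f g t₀ h0 h1 (Quot.mk _ (.inl (.inr (x, t)))) s
      = Quot.mk _ (.inl (.inr (x, pr (rho t₀ s (t : ℝ))))) := rfl

lemma cyl_zero (w : DMC f g) : cyl f g t₀ h0 h1 w 0 = w := by
  induction w using Quot.ind with
  | _ a =>
    rcases a with (x | ⟨x, t⟩) | x
    · rfl
    · rw [cyl_mk₀, rho_zero_left, pr_coe]
    · rfl


section Retr

variable {c c₁ c₂ : ℝ}

noncomputable def r1 : DMC f g → W₁ ⊕ Unit :=
  Quot.lift (Sum.elim (Sum.elim (fun x => .inl x)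
      (fun p => if ((p.2:ℝ) < 1) then .inl (f p.1) else .inr ())) fun _ => .inr ())
    (by rintro a b (⟨x⟩|⟨x⟩) <;> norm_num)

noncomputable def r2 : DMC f g → W₂ ⊕ Unit :=
  Quot.lift (Sum.elim (Sum.elim (fun _ => .inr ())
      (fun p => if ((0:ℝ) < (p.2:ℝ)) then .inl (g p.1) else .inr ())) fun x => .inl x)
    (by rintro a b (⟨x⟩|⟨x⟩) <;> norm_num)

noncomputable def la : DMC f g → W₀ ⊕ Unit :=
  Quot.lift (Sum.elim (Sum.elim (fun _ => .inr ())
      (fun p => if ((0:ℝ) < (p.2:ℝ) ∧ (p.2:ℝ) < 1) then .inl p.1 else .inr ())) fun _ => .inr ())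
    (by rintro a b (⟨x⟩|⟨x⟩) <;> norm_num)

lemma continuousOn_r1 (hf : Continuous f) (hc : c < 1) :
    ContinuousOn (r1 f g) {w | tau f g w ≤ c} := by
  apply quotLift_continuousOn _ (isClosed_le (continuous_tau f g) continuous_const)
  apply continuousOn_sum_elim
  · apply continuousOn_sum_elim
    · exact continuous_inl.continuousOn
    · apply ContinuousOn.congr (f := fun p : W₀ × I => (Sum.inl (f p.1) : W₁ ⊕ Unit))
      · exact (continuous_inl.comp (hf.comp continuous_fst)).continuousOn
      · intro p hp
        have hp' : ((p.2:ℝ)) ≤ c := hp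
        have : ((p.2:ℝ) < 1) := lt_of_le_of_lt hp' hc
        simp [this]
  · exact continuous_const.continuousOn

lemma continuousOn_r2 (hg : Continuous g) (hc : 0 < c) :
    ContinuousOn (r2 f g) {w | c ≤ tau f g w} := by
  apply quotLift_continuousOn _ (isClosed_le continuous_const (continuous_tau f g))
  apply continuousOn_sum_elim
  · apply continuousOn_sum_elim
    · exact continuous_const.continuousOn
    · apply ContinuousOn.congr (f := fun p : W₀ × I => (Sum.inl (g p.1) : W₂ ⊕ Unit))
      · exact (continuous_inl.comp (hg.comp continuous_fst)).continuousOn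
      · intro p hp
        have hp' : c ≤ ((p.2:ℝ)) := hp
        have : ((0:ℝ) < (p.2:ℝ)) := lt_of_lt_of_le hc hp'
        simp [this]
  · exact continuous_inl.continuousOn

lemma continuousOn_la (hc₁ : 0 < c₁) (hc₂ : c₂ < 1) :
    ContinuousOn (la f g) {w | c₁ ≤ tau f g w ∧ tau f g w ≤ c₂} := by
  apply quotLift_continuousOn _ ((isClosed_le continuous_const (continuous_tau f g)).inter
    (isClosed_le (continuous_tau f g) continuous_const))
  apply continuousOn_sum_elim
  · apply continuousOn_sum_elim
    · exact continuous_const.continuousOn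
    · apply ContinuousOn.congr (f := fun p : W₀ × I => (Sum.inl p.1 : W₀ ⊕ Unit))
      · exact (continuous_inl.comp continuous_fst).continuousOn
      · intro p hp
        have hp' : c₁ ≤ ((p.2:ℝ)) ∧ ((p.2:ℝ)) ≤ c₂ := hp
        have : ((0:ℝ) < (p.2:ℝ) ∧ (p.2:ℝ) < 1) :=
          ⟨lt_of_lt_of_le hc₁ hp'.1, lt_of_le_of_lt hp'.2 hc₂⟩
        simp [this]
  · exact continuous_const.continuousOn

@[simp] lemma r1_mk₁ (x : W₁) : r1 f g (Quot.mk _ (.inl (.inl x))) = .inl x := rfl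
@[simp] lemma r2_mk₂ (x : W₂) : r2 f g (Quot.mk _ (.inr x)) = .inl x := rfl
lemma r1_mk₀ (x : W₀) (t : I) (h : (t:ℝ) < 1) :
    r1 f g (Quot.mk _ (.inl (.inr (x, t)))) = .inl (f x) := if_pos h
lemma r2_mk₀ (x : W₀) (t : I) (h : (0:ℝ) < t) :
    r2 f g (Quot.mk _ (.inl (.inr (x, t)))) = .inl (g x) := if_pos h
lemma la_mk₀ (x : W₀) (t : I) (h : (0:ℝ) < t ∧ (t:ℝ) < 1) :
    la f g (Quot.mk _ (.inl (.inr (x, t)))) = .inl x := if_pos h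

lemma r1_spec (hc : c < 1) {w : DMC f g} (hw : tau f g w ≤ c) :
    ∃ x₁, r1 f g w = Sum.inl x₁ ∧ ((w = Quot.mk _ (.inl (.inl x₁))) ∨
      (∃ x₀ t, x₁ = f x₀ ∧ w = Quot.mk _ (.inl (.inr (x₀, t))))) := by
  induction w using Quot.ind with
  | _ a =>
    rcases a with (x | ⟨x, t⟩) | x
    · exact ⟨x, rfl, Or.inl rfl⟩
    · have ht : (t:ℝ) < 1 := lt_of_le_of_lt (by simpa using hw) hc
      exact ⟨f x, r1_mk₀ f g x t ht, Or.inr ⟨x, t, rfl, rfl⟩⟩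
    · rw [tau_mk₂] at hw; linarith

lemma r2_spec (hc : 0 < c) {w : DMC f g} (hw : c ≤ tau f g w) :
    ∃ x₂, r2 f g w = Sum.inl x₂ ∧ ((w = Quot.mk _ (.inr x₂)) ∨
      (∃ x₀ t, x₂ = g x₀ ∧ w = Quot.mk _ (.inl (.inr (x₀, t))))) := by
  induction w using Quot.ind with
  | _ a =>
    rcases a with (x | ⟨x, t⟩) | x
    · rw [tau_mk₁] at hw; linarith
    · have ht : (0:ℝ) < (t:ℝ) := lt_of_lt_of_le hc (by simpa using hw)
      exact ⟨g x, r2_mk₀ f g x t ht, Or.inr ⟨x, t, rfl, rfl⟩⟩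
    · exact ⟨x, rfl, Or.inl rfl⟩

lemma la_spec (hc₁ : 0 < c₁) (hc₂ : c₂ < 1) {w : DMC f g}
    (hw₁ : c₁ ≤ tau f g w) (hw₂ : tau f g w ≤ c₂) :
    ∃ x₀ t, la f g w = Sum.inl x₀ ∧ w = Quot.mk _ (.inl (.inr (x₀, t))) ∧ (t:ℝ) = tau f g w := by
  induction w using Quot.ind with
  | _ a =>
    rcases a with (x | ⟨x, t⟩) | x
    · rw [tau_mk₁] at hw₁; linarith
    · have ht : (0:ℝ) < (t:ℝ) ∧ (t:ℝ) < 1 :=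
        ⟨lt_of_lt_of_le hc₁ (by simpa using hw₁), lt_of_le_of_lt (by simpa using hw₂) hc₂⟩
      exact ⟨x, t, la_mk₀ f g x t ht, rfl, rfl⟩
    · rw [tau_mk₂] at hw₂; linarith

end Retr
end Cyl
end PuppeAux


noncomputable section Main

namespace PuppeAux

open Set

variable {X₀ X₁ X₂ Y : Type} [TopologicalSpace X₀] [TopologicalSpace X₁] [TopologicalSpace X₂]
    [TopologicalSpace Y]
    {f : X₀ → X₁} {g : X₀ → X₂}
    {p₀ : X₀ → Y} {p₁ : X₁ → Y} {p₂ : X₂ → Y} {y₀ : Y}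
    {q : DMC f g → Y}
    {φ₁ : HFib p₀ y₀ → HFib p₁ y₀} {φ₂ : HFib p₀ y₀ → HFib p₂ y₀}

lemma q_cyl (hq₀ : ∀ (x : X₀) (t : I), q (Quot.mk _ (.inl (.inr (x, t)))) = p₀ x)
    {t₀ : ℝ} (h0 : 0 ≤ t₀) (h1 : t₀ ≤ 1) (w : DMC f g) (s : I) :
    q (cyl f g t₀ h0 h1 w s) = q w := by
  induction w using Quot.ind with
  | _ a =>
    rcases a with (x | ⟨x, t⟩) | x
    · rfl
    · rw [cyl_mk₀, hq₀, hq₀]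
    · rfl

/-- The deformation of the homotopy fiber of `q` induced by the cylinder deformation. -/
def Phiq (hq₀ : ∀ (x : X₀) (t : I), q (Quot.mk _ (.inl (.inr (x, t)))) = p₀ x)
    {t₀ : ℝ} (h0 : 0 ≤ t₀) (h1 : t₀ ≤ 1) : C(HFib q y₀ × I, HFib q y₀) where
  toFun := fun z => ⟨(cyl f g t₀ h0 h1 z.1.1.1 z.2, z.1.1.2), by
    refine ⟨?_, z.1.2.2⟩
    rw [z.1.2.1, q_cyl hq₀ h0 h1]⟩
  continuous_toFun := by
    apply Continuous.subtype_mk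
    apply Continuous.prodMk
    · exact ContinuousEval.continuous_eval.comp
        (((continuous_cyl f g h0 h1).comp
          (continuous_subtype_val.comp continuous_fst).fst).prodMk continuous_snd)
    · exact (continuous_subtype_val.comp continuous_fst).snd


open Classical in
variable (φ₁ φ₂) in
/-- Partial constructor of `X₁`-type points. -/
noncomputable def W1 (junkB : DMC φ₁ φ₂) : X₁ × C(I, Y) → DMC φ₁ φ₂ := fun w =>
  if h : w.2 0 = p₁ w.1 ∧ w.2 1 = y₀ then Quot.mk _ (.inl (.inl ⟨w, h⟩)) else junkB

open Classical in
variable (φ₁ φ₂) in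
noncomputable def W2 (junkB : DMC φ₁ φ₂) : X₂ × C(I, Y) → DMC φ₁ φ₂ := fun w =>
  if h : w.2 0 = p₂ w.1 ∧ w.2 1 = y₀ then Quot.mk _ (.inr ⟨w, h⟩) else junkB

open Classical in
variable (φ₁ φ₂) in
noncomputable def W0 (junkB : DMC φ₁ φ₂) : (X₀ × C(I, Y)) × I → DMC φ₁ φ₂ := fun w =>
  if h : w.1.2 0 = p₀ w.1.1 ∧ w.1.2 1 = y₀ then Quot.mk _ (.inl (.inr (⟨w.1, h⟩, w.2)))
  else junkB

lemma continuousOn_W1 (junkB : DMC φ₁ φ₂) :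
    ContinuousOn (W1 φ₁ φ₂ junkB) {w : X₁ × C(I, Y) | w.2 0 = p₁ w.1 ∧ w.2 1 = y₀} := by
  rw [continuousOn_iff_continuous_restrict]
  apply Continuous.congr (f := fun w : {w : X₁ × C(I, Y) // w.2 0 = p₁ w.1 ∧ w.2 1 = y₀} =>
    Quot.mk (CylRel φ₁ φ₂) (.inl (.inl (⟨w.1, w.2⟩ : HFib p₁ y₀))))
  · exact continuous_quot_mk.comp (continuous_inl.comp (continuous_inl.comp
      (Continuous.subtype_mk continuous_subtype_val _)))
  · intro w
    simp only [Set.restrict_apply, W1, dif_pos w.2]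
    erw [dif_pos w.2]

lemma continuousOn_W2 (junkB : DMC φ₁ φ₂) :
    ContinuousOn (W2 φ₁ φ₂ junkB) {w : X₂ × C(I, Y) | w.2 0 = p₂ w.1 ∧ w.2 1 = y₀} := by
  rw [continuousOn_iff_continuous_restrict]
  apply Continuous.congr (f := fun w : {w : X₂ × C(I, Y) // w.2 0 = p₂ w.1 ∧ w.2 1 = y₀} =>
    Quot.mk (CylRel φ₁ φ₂) (.inr (⟨w.1, w.2⟩ : HFib p₂ y₀)))
  · exact continuous_quot_mk.comp (continuous_inr.comp
      (Continuous.subtype_mk continuous_subtype_val _))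
  · intro w
    simp only [Set.restrict_apply, W2, dif_pos w.2]
    erw [dif_pos w.2]

lemma continuousOn_W0 (junkB : DMC φ₁ φ₂) :
    ContinuousOn (W0 φ₁ φ₂ junkB)
      {w : (X₀ × C(I, Y)) × I | w.1.2 0 = p₀ w.1.1 ∧ w.1.2 1 = y₀} := by
  rw [continuousOn_iff_continuous_restrict]
  apply Continuous.congr
    (f := fun w : {w : (X₀ × C(I, Y)) × I // w.1.2 0 = p₀ w.1.1 ∧ w.1.2 1 = y₀} =>
      Quot.mk (CylRel φ₁ φ₂) (.inl (.inr ((⟨w.1.1, w.2⟩ : HFib p₀ y₀), w.1.2))))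
  · exact continuous_quot_mk.comp (continuous_inl.comp (continuous_inr.comp
      ((Continuous.subtype_mk (continuous_subtype_val.fst) _).prodMk
        (continuous_subtype_val.snd))))
  · intro w
    simp only [Set.restrict_apply, W0, dif_pos w.2]
    erw [dif_pos w.2]

variable (q φ₁ φ₂) in
/-- The homotopy inverse of `c`. -/
noncomputable def ee (junkB : DMC φ₁ φ₂) (t₀ : ℝ) : HFib q y₀ → DMC φ₁ φ₂ := fun z =>
  if tau f g z.1.1 ≤ t₀/2 then
    Sum.elim (fun x => W1 φ₁ φ₂ junkB (x, z.1.2)) (fun _ => junkB) (r1 f g z.1.1)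
  else if tau f g z.1.1 ≤ (t₀+1)/2 then
    Sum.elim (fun x => W0 φ₁ φ₂ junkB ((x, z.1.2), pr (sig t₀ (tau f g z.1.1))))
      (fun _ => junkB) (la f g z.1.1)
  else
    Sum.elim (fun x => W2 φ₁ φ₂ junkB (x, z.1.2)) (fun _ => junkB) (r2 f g z.1.1)

lemma continuous_ee (hf : Continuous f)  (hg : Continuous g)
    (hcomm₁ : p₁ ∘ f = p₀) (hcomm₂ : p₂ ∘ g = p₀)
    (hq₁ : ∀ x : X₁, q (Quot.mk _ (.inl (.inl x))) = p₁ x)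
    (hq₂ : ∀ x : X₂, q (Quot.mk _ (.inr x)) = p₂ x)
    (hq₀ : ∀ (x : X₀) (t : I), q (Quot.mk _ (.inl (.inr (x, t)))) = p₀ x)
    (hφ₁ : ∀ z : HFib p₀ y₀, (φ₁ z).1.1 = f z.1.1 ∧ (φ₁ z).1.2 = z.1.2)
    (hφ₂ : ∀ z : HFib p₀ y₀, (φ₂ z).1.1 = g z.1.1 ∧ (φ₂ z).1.2 = z.1.2)
    (junkB : DMC φ₁ φ₂) {t₀ : ℝ} (ht0 : 0 < t₀) (ht1 : t₀ < 1) :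
    Continuous (ee q φ₁ φ₂ junkB t₀) := by
  have hα : t₀/2 < 1 := by linarith
  have hα0 : 0 < t₀/2 := by linarith
  have hβ : (t₀+1)/2 < 1 := by linarith
  have hβ0 : 0 < (t₀+1)/2 := by linarith
  have htt : Continuous (fun z : HFib q y₀ => tau f g z.1.1) :=
    (continuous_tau f g).comp (continuous_subtype_val.fst)
  apply continuous_of_three_closed (s := {z : HFib q y₀ | tau f g z.1.1 ≤ t₀/2})
    (t := {z : HFib q y₀ | t₀/2 ≤ tau f g z.1.1 ∧ tau f g z.1.1 ≤ (t₀+1)/2})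
    (u := {z : HFib q y₀ | (t₀+1)/2 ≤ tau f g z.1.1})
    (isClosed_le htt continuous_const)
    ((isClosed_le continuous_const htt).inter (isClosed_le htt continuous_const))
    (isClosed_le continuous_const htt)
  · ext z; simp only [Set.mem_union, Set.mem_setOf_eq, Set.mem_univ, iff_true]
    rcases le_total (tau f g z.1.1) (t₀/2) with h | h
    · exact Or.inl (Or.inl h)
    · rcases le_total (tau f g z.1.1) ((t₀+1)/2) with h2 | h2
      · exact Or.inl (Or.inr ⟨h, h2⟩)
      · exact Or.inr h2
  -- branch 1
  · apply ContinuousOn.congr (f := fun z : HFib q y₀ =>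
      Sum.elim (fun x => W1 φ₁ φ₂ junkB (x, z.1.2)) (fun _ => junkB) (r1 f g z.1.1))
    · by_cases hne : Nonempty X₁
      · have x₁0 : X₁ := Classical.arbitrary X₁
        apply ContinuousOn.congr (f := fun z : HFib q y₀ =>
          W1 φ₁ φ₂ junkB (Sum.elim id (fun _ => x₁0) (r1 f g z.1.1), z.1.2))
        · show ContinuousOn ((W1 φ₁ φ₂ junkB) ∘ (fun z : HFib q y₀ =>
            (Sum.elim id (fun _ => x₁0) (r1 f g z.1.1), z.1.2))) _
          apply ContinuousOn.comp (continuousOn_W1 junkB)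
          · apply ContinuousOn.prodMk
            · show ContinuousOn ((Sum.elim id (fun _ => x₁0)) ∘
                ((r1 f g) ∘ (fun z : HFib q y₀ => z.1.1))) _
              apply ContinuousOn.comp
                (Continuous.continuousOn (Continuous.sumElim continuous_id continuous_const))
              · exact ContinuousOn.comp (continuousOn_r1 f g hf hα)
                  ((continuous_subtype_val.fst).continuousOn) (fun z hz => hz)
              · exact Set.mapsTo_univ _ _
            · exact (continuous_subtype_val.snd).continuousOn
          · intro z hz
            obtain ⟨x, hx, hcase⟩ := r1_spec f g hα hz
            simp only [Set.mem_setOf_eq, hx, Sum.elim_inl, id_eq]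
            refine ⟨?_, z.2.2⟩
            rcases hcase with h | ⟨x₀, t, hx₀, hw⟩
            · rw [z.2.1, h, hq₁]
            · rw [z.2.1, hw, hq₀, hx₀]
              exact (congrFun hcomm₁ x₀).symm
        · intro z hz
          obtain ⟨x, hx, -⟩ := r1_spec f g hα hz
          simp only [hx, Sum.elim_inl, id_eq]
      · intro z hz
        obtain ⟨x, -, -⟩ := r1_spec f g hα hz
        exact absurd ⟨x⟩ hne
    · intro z hz
      have hz' : tau f g z.1.1 ≤ t₀/2 := hz
      show ee q φ₁ φ₂ junkB t₀ z = _
      beta_reduce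
      unfold ee
      rw [if_pos hz']
  -- branch 2
  · apply ContinuousOn.congr (f := fun z : HFib q y₀ =>
      Sum.elim (fun x => W0 φ₁ φ₂ junkB ((x, z.1.2), pr (sig t₀ (tau f g z.1.1))))
        (fun _ => junkB) (la f g z.1.1))
    · by_cases hne : Nonempty X₀
      · have x00 : X₀ := Classical.arbitrary X₀
        apply ContinuousOn.congr (f := fun z : HFib q y₀ =>
          W0 φ₁ φ₂ junkB ((Sum.elim id (fun _ => x00) (la f g z.1.1), z.1.2),
            pr (sig t₀ (tau f g z.1.1))))
        · show ContinuousOn ((W0 φ₁ φ₂ junkB) ∘ (fun z : HFib q y₀ =>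
            ((Sum.elim id (fun _ => x00) (la f g z.1.1), z.1.2),
              pr (sig t₀ (tau f g z.1.1))))) _
          apply ContinuousOn.comp (continuousOn_W0 junkB)
          · apply ContinuousOn.prodMk
            · apply ContinuousOn.prodMk
              · show ContinuousOn ((Sum.elim id (fun _ => x00)) ∘
                  ((la f g) ∘ (fun z : HFib q y₀ => z.1.1))) _
                apply ContinuousOn.comp
                  (Continuous.continuousOn (Continuous.sumElim continuous_id continuous_const))
                · exact ContinuousOn.comp (continuousOn_la f g hα0 hβ)
                    ((continuous_subtype_val.fst).continuousOn) (fun z hz => hz)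
                · exact Set.mapsTo_univ _ _
              · exact (continuous_subtype_val.snd).continuousOn
            · exact (continuous_pr.comp ((continuous_sig t₀).comp htt)).continuousOn
          · intro z hz
            obtain ⟨x, t, hx, hw, -⟩ := la_spec f g hα0 hβ hz.1 hz.2
            simp only [Set.mem_setOf_eq, hx, Sum.elim_inl, id_eq]
            refine ⟨?_, z.2.2⟩
            rw [z.2.1, hw, hq₀]
        · intro z hz
          obtain ⟨x, t, hx, -, -⟩ := la_spec f g hα0 hβ hz.1 hz.2
          simp only [hx, Sum.elim_inl, id_eq]
      · intro z hz
        obtain ⟨x, t, -, -, -⟩ := la_spec f g hα0 hβ hz.1 hz.2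
        exact absurd ⟨x⟩ hne
    · intro z hz
      have hz1 : t₀/2 ≤ tau f g z.1.1 := hz.1
      have hz2 : tau f g z.1.1 ≤ (t₀+1)/2 := hz.2
      show ee q φ₁ φ₂ junkB t₀ z = _
      beta_reduce
      rcases eq_or_lt_of_le hz1 with h | h
      · -- boundary case tau = t₀/2
        obtain ⟨x, t, hla, hw, hta⟩ := la_spec f g hα0 hα h.le h.ge
        have hr1 : r1 f g z.1.1 = .inl (f x) := by
          rw [hw]
          exact r1_mk₀ f g x t (by rw [hta, ← h]; linarith)
        have cond0 : z.1.2 0 = p₀ x ∧ z.1.2 1 = y₀ := ⟨by rw [z.2.1, hw, hq₀], z.2.2⟩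
        have cond1 : z.1.2 0 = p₁ (f x) ∧ z.1.2 1 = y₀ :=
          ⟨by rw [cond0.1]; exact (congrFun hcomm₁ x).symm, z.2.2⟩
        have hsig : sig t₀ (tau f g z.1.1) = 0 := by
          rw [← h]; unfold sig
          have h2 : 2*(t₀/2) - t₀ = 0 := by ring
          rw [h2]
          norm_num
        have lhs : ee q φ₁ φ₂ junkB t₀ z
            = Quot.mk _ (.inl (.inl (⟨(f x, z.1.2), cond1⟩ : HFib p₁ y₀))) := by
          unfold ee
          rw [if_pos h.ge, hr1]
          simp only [Sum.elim_inl, W1, dif_pos cond1]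
          erw [dif_pos cond1]
        rw [lhs, hla]
        simp only [Sum.elim_inl, W0, dif_pos cond0, hsig, pr_zero]
        erw [dif_pos cond0]
        have hphi : φ₁ (⟨(x, z.1.2), cond0⟩ : HFib p₀ y₀) = ⟨(f x, z.1.2), cond1⟩ := by
          apply Subtype.ext
          apply Prod.ext
          · exact (hφ₁ _).1
          · exact (hφ₁ _).2
        rw [← hphi]
        exact (Quot.sound (CylRel.zero _)).symm
      · unfold ee
        rw [if_neg (not_le.mpr h), if_pos hz2]
  -- branch 3
  · apply ContinuousOn.congr (f := fun z : HFib q y₀ =>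
      Sum.elim (fun x => W2 φ₁ φ₂ junkB (x, z.1.2)) (fun _ => junkB) (r2 f g z.1.1))
    · by_cases hne : Nonempty X₂
      · have x₂0 : X₂ := Classical.arbitrary X₂
        apply ContinuousOn.congr (f := fun z : HFib q y₀ =>
          W2 φ₁ φ₂ junkB (Sum.elim id (fun _ => x₂0) (r2 f g z.1.1), z.1.2))
        · show ContinuousOn ((W2 φ₁ φ₂ junkB) ∘ (fun z : HFib q y₀ =>
            (Sum.elim id (fun _ => x₂0) (r2 f g z.1.1), z.1.2))) _
          apply ContinuousOn.comp (continuousOn_W2 junkB)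
          · apply ContinuousOn.prodMk
            · show ContinuousOn ((Sum.elim id (fun _ => x₂0)) ∘
                ((r2 f g) ∘ (fun z : HFib q y₀ => z.1.1))) _
              apply ContinuousOn.comp
                (Continuous.continuousOn (Continuous.sumElim continuous_id continuous_const))
              · exact ContinuousOn.comp (continuousOn_r2 f g hg hβ0)
                  ((continuous_subtype_val.fst).continuousOn) (fun z hz => hz)
              · exact Set.mapsTo_univ _ _
            · exact (continuous_subtype_val.snd).continuousOn
          · intro z hz
            obtain ⟨x, hx, hcase⟩ := r2_spec f g hβ0 hz
            simp only [Set.mem_setOf_eq, hx, Sum.elim_inl, id_eq]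
            refine ⟨?_, z.2.2⟩
            rcases hcase with h | ⟨x₀, t, hx₀, hw⟩
            · rw [z.2.1, h, hq₂]
            · rw [z.2.1, hw, hq₀, hx₀]
              exact (congrFun hcomm₂ x₀).symm
        · intro z hz
          obtain ⟨x, hx, -⟩ := r2_spec f g hβ0 hz
          simp only [hx, Sum.elim_inl, id_eq]
      · intro z hz
        obtain ⟨x, -, -⟩ := r2_spec f g hβ0 hz
        exact absurd ⟨x⟩ hne
    · intro z hz
      have hz' : (t₀+1)/2 ≤ tau f g z.1.1 := hz
      show ee q φ₁ φ₂ junkB t₀ z = _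
      beta_reduce
      rcases eq_or_lt_of_le hz' with h | h
      · -- boundary case tau = (t₀+1)/2
        obtain ⟨x, t, hla, hw, hta⟩ := la_spec f g hβ0 hβ h.le h.ge
        have hr2 : r2 f g z.1.1 = .inl (g x) := by
          rw [hw]
          exact r2_mk₀ f g x t (by rw [hta, ← h]; linarith)
        have cond0 : z.1.2 0 = p₀ x ∧ z.1.2 1 = y₀ := ⟨by rw [z.2.1, hw, hq₀], z.2.2⟩
        have cond2 : z.1.2 0 = p₂ (g x) ∧ z.1.2 1 = y₀ :=
          ⟨by rw [cond0.1]; exact (congrFun hcomm₂ x).symm, z.2.2⟩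
        have hsig : sig t₀ (tau f g z.1.1) = 1 := by
          rw [← h]; unfold sig
          rw [min_eq_left (by linarith), max_eq_right (by norm_num)]
        have lhs : ee q φ₁ φ₂ junkB t₀ z
            = Quot.mk _ (.inl (.inr ((⟨(x, z.1.2), cond0⟩ : HFib p₀ y₀), pr 1))) := by
          unfold ee
          rw [if_neg (by rw [← h]; push_neg; linarith), if_pos h.ge, hla]
          simp only [Sum.elim_inl, W0, dif_pos cond0, hsig]
          erw [dif_pos cond0]
        rw [lhs, hr2, pr_one]
        simp only [Sum.elim_inl, W2, dif_pos cond2]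
        erw [dif_pos cond2]
        have hphi : φ₂ (⟨(x, z.1.2), cond0⟩ : HFib p₀ y₀) = ⟨(g x, z.1.2), cond2⟩ := by
          apply Subtype.ext
          apply Prod.ext
          · exact (hφ₂ _).1
          · exact (hφ₂ _).2
        rw [← hphi]
        exact Quot.sound (CylRel.one _)
      · unfold ee
        rw [if_neg (not_le.mpr (by linarith)), if_neg (not_le.mpr h)]


section Compute

variable (hcomm₁ : p₁ ∘ f = p₀) (hcomm₂ : p₂ ∘ g = p₀)
  (hq₁ : ∀ x : X₁, q (Quot.mk _ (.inl (.inl x))) = p₁ x)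
  (hq₂ : ∀ x : X₂, q (Quot.mk _ (.inr x)) = p₂ x)
  (hq₀ : ∀ (x : X₀) (t : I), q (Quot.mk _ (.inl (.inr (x, t)))) = p₀ x)
  (hφ₁ : ∀ z : HFib p₀ y₀, (φ₁ z).1.1 = f z.1.1 ∧ (φ₁ z).1.2 = z.1.2)
  (hφ₂ : ∀ z : HFib p₀ y₀, (φ₂ z).1.1 = g z.1.1 ∧ (φ₂ z).1.2 = z.1.2)
  {c : DMC φ₁ φ₂ → HFib q y₀}
  (hc₁ : ∀ z : HFib p₁ y₀,
      (c (Quot.mk _ (.inl (.inl z)))).1.1 = Quot.mk _ (.inl (.inl z.1.1)) ∧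
        (c (Quot.mk _ (.inl (.inl z)))).1.2 = z.1.2)
  (hc₂ : ∀ z : HFib p₂ y₀,
      (c (Quot.mk _ (.inr z))).1.1 = Quot.mk _ (.inr z.1.1) ∧
        (c (Quot.mk _ (.inr z))).1.2 = z.1.2)
  (hc₀ : ∀ (z : HFib p₀ y₀) (t : I),
      (c (Quot.mk _ (.inl (.inr (z, t))))).1.1 = Quot.mk _ (.inl (.inr (z.1.1, t))) ∧
        (c (Quot.mk _ (.inl (.inr (z, t))))).1.2 = z.1.2)
  (junkB : DMC φ₁ φ₂) {t₀ : ℝ} (ht0 : 0 < t₀) (ht1 : t₀ < 1)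

include hq₁ hq₂ hq₀ hc₁ hc₂ hc₀ ht0 ht1

/-- `ee ∘ c` is the time-one clamp deformation of the double mapping cylinder of fibers. -/
lemma ee_comp_c (hcomm₁ : p₁ ∘ f = p₀) (hcomm₂ : p₂ ∘ g = p₀)
    (hφ₁ : ∀ z : HFib p₀ y₀, (φ₁ z).1.1 = f z.1.1 ∧ (φ₁ z).1.2 = z.1.2)
    (hφ₂ : ∀ z : HFib p₀ y₀, (φ₂ z).1.1 = g z.1.1 ∧ (φ₂ z).1.2 = z.1.2)
    (b : DMC φ₁ φ₂) :
    ee q φ₁ φ₂ junkB t₀ (c b) = cyl φ₁ φ₂ t₀ ht0.le ht1.le b 1 := by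
  have hα0 : 0 < t₀/2 := by linarith
  have hα : t₀/2 < 1 := by linarith
  have hβ0 : 0 < (t₀+1)/2 := by linarith
  have hβ : (t₀+1)/2 < 1 := by linarith
  induction b using Quot.ind with
  | _ a =>
    rcases a with (z | ⟨z, t⟩) | z
    · -- X₁-type point
      have h11 := (hc₁ z).1
      have h12 := (hc₁ z).2
      unfold ee
      rw [if_pos (by rw [h11, tau_mk₁]; linarith)]
      rw [cyl_mk₁]
      have hr : r1 f g (c (Quot.mk _ (.inl (.inl z)))).1.1 = .inl z.1.1 := by
        rw [h11]; rfl
      rw [hr]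
      simp only [Sum.elim_inl, W1]
      erw [dif_pos (by rw [h12]; exact z.2)]
      congr 1
      congr 1
      congr 1
      apply Subtype.ext
      show (z.1.1, (c (Quot.mk _ (.inl (.inl z)))).1.2) = z.1
      rw [h12]
    · -- cylinder point
      have h01 := (hc₀ z t).1
      have h02 := (hc₀ z t).2
      have htau : tau f g (c (Quot.mk _ (.inl (.inr (z, t))))).1.1 = (t : ℝ) := by
        rw [h01, tau_mk₀]
      rw [cyl_mk₀]
      rcases le_or_gt (t : ℝ) (t₀/2) with h | h
      · -- lower part
        have hsig : sig t₀ (t : ℝ) = 0 := by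
          unfold sig
          rw [min_eq_right (by linarith), max_eq_left (by linarith)]
        unfold ee
        rw [if_pos (by rw [htau]; exact h)]
        have hr : r1 f g (c (Quot.mk _ (.inl (.inr (z, t))))).1.1 = .inl (f z.1.1) := by
          rw [h01]; exact r1_mk₀ f g z.1.1 t (by linarith)
        rw [hr]
        simp only [Sum.elim_inl, W1]
        have cond1 : (c (Quot.mk _ (.inl (.inr (z, t))))).1.2 0 = p₁ (f z.1.1) ∧
            (c (Quot.mk _ (.inl (.inr (z, t))))).1.2 1 = y₀ := by
          rw [h02]
          exact ⟨by rw [z.2.1]; exact (congrFun hcomm₁ z.1.1).symm, z.2.2⟩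
        erw [dif_pos cond1, rho_one_left, hsig, pr_zero]
        have hphi : φ₁ z = ⟨(f z.1.1, (c (Quot.mk _ (.inl (.inr (z, t))))).1.2), cond1⟩ := by
          apply Subtype.ext
          apply Prod.ext
          · exact (hφ₁ z).1
          · rw [h02]; exact (hφ₁ z).2
        rw [← hphi]
        exact (Quot.sound (CylRel.zero z)).symm
      · rcases le_or_gt (t : ℝ) ((t₀+1)/2) with h2 | h2
        · -- middle part
          unfold ee
          rw [if_neg (by rw [htau]; push_neg; exact h), if_pos (by rw [htau]; exact h2)]
          have hla : la f g (c (Quot.mk _ (.inl (.inr (z, t))))).1.1 = .inl z.1.1 := by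
            rw [h01]; exact la_mk₀ f g z.1.1 t ⟨by linarith, by linarith⟩
          rw [hla]
          simp only [Sum.elim_inl, W0]
          have cond0 : (c (Quot.mk _ (.inl (.inr (z, t))))).1.2 0 = p₀ z.1.1 ∧
              (c (Quot.mk _ (.inl (.inr (z, t))))).1.2 1 = y₀ := by
            rw [h02]; exact z.2
          erw [dif_pos cond0, htau]
          congr 2
          congr 1
          congr 1
          · apply Subtype.ext
            show (z.1.1, (c (Quot.mk _ (.inl (.inr (z, t))))).1.2) = z.1
            rw [h02]
          · rw [rho_one_left]
        · -- upper part
          have hsig : sig t₀ (t : ℝ) = 1 := by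
            unfold sig
            rw [min_eq_left (by linarith), max_eq_right (by norm_num)]
          unfold ee
          rw [if_neg (by rw [htau]; push_neg; linarith),
            if_neg (by rw [htau]; push_neg; exact h2)]
          have hr : r2 f g (c (Quot.mk _ (.inl (.inr (z, t))))).1.1 = .inl (g z.1.1) := by
            rw [h01]; exact r2_mk₀ f g z.1.1 t (by linarith)
          rw [hr]
          simp only [Sum.elim_inl, W2]
          have cond2 : (c (Quot.mk _ (.inl (.inr (z, t))))).1.2 0 = p₂ (g z.1.1) ∧
              (c (Quot.mk _ (.inl (.inr (z, t))))).1.2 1 = y₀ := by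
            rw [h02]
            exact ⟨by rw [z.2.1]; exact (congrFun hcomm₂ z.1.1).symm, z.2.2⟩
          erw [dif_pos cond2, rho_one_left, hsig, pr_one]
          have hphi : φ₂ z = ⟨(g z.1.1, (c (Quot.mk _ (.inl (.inr (z, t))))).1.2), cond2⟩ := by
            apply Subtype.ext
            apply Prod.ext
            · exact (hφ₂ z).1
            · rw [h02]; exact (hφ₂ z).2
          rw [← hphi]
          exact (Quot.sound (CylRel.one z)).symm
    · -- X₂-type point
      have h21 := (hc₂ z).1
      have h22 := (hc₂ z).2
      unfold ee
      rw [if_neg (by rw [h21, tau_mk₂]; push_neg; linarith),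
        if_neg (by rw [h21, tau_mk₂]; push_neg; linarith)]
      rw [cyl_mk₂]
      have hr : r2 f g (c (Quot.mk _ (.inr z))).1.1 = .inl z.1.1 := by
        rw [h21]; rfl
      rw [hr]
      simp only [Sum.elim_inl, W2]
      erw [dif_pos (by rw [h22]; exact z.2)]
      congr 1
      congr 1
      apply Subtype.ext
      show (z.1.1, (c (Quot.mk _ (.inr z))).1.2) = z.1
      rw [h22]

/-- `c ∘ ee` is the time-one clamp deformation of the homotopy fiber of `q`. -/
lemma c_comp_ee (hcomm₁ : p₁ ∘ f = p₀) (hcomm₂ : p₂ ∘ g = p₀) (zq : HFib q y₀) :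
    (c (ee q φ₁ φ₂ junkB t₀ zq)).1.1 = cyl f g t₀ ht0.le ht1.le zq.1.1 1 ∧
      (c (ee q φ₁ φ₂ junkB t₀ zq)).1.2 = zq.1.2 := by
  have hα0 : 0 < t₀/2 := by linarith
  have hα : t₀/2 < 1 := by linarith
  have hβ0 : 0 < (t₀+1)/2 := by linarith
  have hβ : (t₀+1)/2 < 1 := by linarith
  obtain ⟨a, ha⟩ := Quot.exists_rep zq.1.1
  rcases a with (x | ⟨x, t⟩) | x
  · -- over an X₁ point
    have htau : tau f g zq.1.1 = 0 := by rw [← ha]; rfl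
    have cond1 : zq.1.2 0 = p₁ x ∧ zq.1.2 1 = y₀ := by
      refine ⟨?_, zq.2.2⟩
      rw [zq.2.1, ← ha, hq₁]
    have hee : ee q φ₁ φ₂ junkB t₀ zq
        = Quot.mk _ (.inl (.inl (⟨(x, zq.1.2), cond1⟩ : HFib p₁ y₀))) := by
      unfold ee
      rw [if_pos (by rw [htau]; linarith)]
      have hr : r1 f g zq.1.1 = .inl x := by rw [← ha]; rfl
      rw [hr]
      simp only [Sum.elim_inl, W1]
      erw [dif_pos cond1]
    rw [hee, ← ha, cyl_mk₁]
    exact hc₁ _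
  · -- over a cylinder point
    have htau : tau f g zq.1.1 = (t : ℝ) := by rw [← ha]; rfl
    have cond0 : zq.1.2 0 = p₀ x ∧ zq.1.2 1 = y₀ := by
      refine ⟨?_, zq.2.2⟩
      rw [zq.2.1, ← ha, hq₀]
    rw [← ha, cyl_mk₀, rho_one_left]
    rcases le_or_gt (t : ℝ) (t₀/2) with h | h
    · have hsig : sig t₀ (t : ℝ) = 0 := by
        unfold sig
        rw [min_eq_right (by linarith), max_eq_left (by linarith)]
      have cond1 : zq.1.2 0 = p₁ (f x) ∧ zq.1.2 1 = y₀ := by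
        refine ⟨?_, zq.2.2⟩
        rw [cond0.1]
        exact (congrFun hcomm₁ x).symm
      have hee : ee q φ₁ φ₂ junkB t₀ zq
          = Quot.mk _ (.inl (.inl (⟨(f x, zq.1.2), cond1⟩ : HFib p₁ y₀))) := by
        unfold ee
        rw [if_pos (by rw [htau]; exact h)]
        have hr : r1 f g zq.1.1 = .inl (f x) := by
          rw [← ha]; exact r1_mk₀ f g x t (by linarith)
        rw [hr]
        simp only [Sum.elim_inl, W1]
        erw [dif_pos cond1]
      rw [hee, hsig, pr_zero]
      refine ⟨?_, (hc₁ _).2⟩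
      erw [(hc₁ _).1]
      exact (Quot.sound (CylRel.zero x)).symm
    · rcases le_or_gt (t : ℝ) ((t₀+1)/2) with h2 | h2
      · have hee : ee q φ₁ φ₂ junkB t₀ zq
            = Quot.mk _ (.inl (.inr ((⟨(x, zq.1.2), cond0⟩ : HFib p₀ y₀),
              pr (sig t₀ (t : ℝ))))) := by
          unfold ee
          rw [if_neg (by rw [htau]; push_neg; exact h), if_pos (by rw [htau]; exact h2)]
          have hla : la f g zq.1.1 = .inl x := by
            rw [← ha]; exact la_mk₀ f g x t ⟨by linarith, by linarith⟩
          rw [hla]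
          simp only [Sum.elim_inl, W0]
          erw [dif_pos cond0, htau]
        rw [hee]
        exact hc₀ _ _
      · have hsig : sig t₀ (t : ℝ) = 1 := by
          unfold sig
          rw [min_eq_left (by linarith), max_eq_right (by norm_num)]
        have cond2 : zq.1.2 0 = p₂ (g x) ∧ zq.1.2 1 = y₀ := by
          refine ⟨?_, zq.2.2⟩
          rw [cond0.1]
          exact (congrFun hcomm₂ x).symm
        have hee : ee q φ₁ φ₂ junkB t₀ zq
            = Quot.mk _ (.inr (⟨(g x, zq.1.2), cond2⟩ : HFib p₂ y₀)) := by
          unfold ee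
          rw [if_neg (by rw [htau]; push_neg; linarith),
            if_neg (by rw [htau]; push_neg; exact h2)]
          have hr : r2 f g zq.1.1 = .inl (g x) := by
            rw [← ha]; exact r2_mk₀ f g x t (by linarith)
          rw [hr]
          simp only [Sum.elim_inl, W2]
          erw [dif_pos cond2]
        rw [hee, hsig, pr_one]
        refine ⟨?_, (hc₂ _).2⟩
        erw [(hc₂ _).1]
        exact (Quot.sound (CylRel.one x)).symm
  · -- over an X₂ point
    have htau : tau f g zq.1.1 = 1 := by rw [← ha]; rfl
    have cond2 : zq.1.2 0 = p₂ x ∧ zq.1.2 1 = y₀ := by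
      refine ⟨?_, zq.2.2⟩
      rw [zq.2.1, ← ha, hq₂]
    have hee : ee q φ₁ φ₂ junkB t₀ zq
        = Quot.mk _ (.inr (⟨(x, zq.1.2), cond2⟩ : HFib p₂ y₀)) := by
      unfold ee
      rw [if_neg (by rw [htau]; push_neg; linarith),
        if_neg (by rw [htau]; push_neg; linarith)]
      have hr : r2 f g zq.1.1 = .inl x := by rw [← ha]; rfl
      rw [hr]
      simp only [Sum.elim_inl, W2]
      erw [dif_pos cond2]
    rw [hee, ← ha, cyl_mk₂]
    exact hc₂ _

end Compute

lemma cyl_fix_mid {V₀ V₁ V₂ : Type} [TopologicalSpace V₀] [TopologicalSpace V₁]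
    [TopologicalSpace V₂] (f' : V₀ → V₁) (g' : V₀ → V₂) {t₀ : ℝ} (h0 : 0 ≤ t₀) (h1 : t₀ ≤ 1)
    (x : V₀) (t : I) (ht : (t : ℝ) = t₀) (s : I) :
    cyl f' g' t₀ h0 h1 (Quot.mk _ (.inl (.inr (x, t)))) s = Quot.mk _ (.inl (.inr (x, t))) := by
  rw [cyl_mk₀]
  have hpr : pr (rho t₀ s (t : ℝ)) = t := by
    rw [ht, rho_self t₀ h0 h1, ← ht, pr_coe]
  rw [hpr]

lemma deform_homotopic {Z : Type} [TopologicalSpace Z] {z : Z} {N : Type}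
    (Φ : C(Z × I, Z)) (hΦ0 : ∀ w, Φ (w, 0) = w) (hΦz : ∀ s, Φ (z, s) = z)
    (γ δ : Ω^ N Z z) (h1 : ∀ t, δ.1 t = Φ (γ.1 t, 1)) : GenLoop.Homotopic γ δ := by
  constructor
  exact
    { toFun := fun p => Φ (γ.1 p.2, p.1)
      continuous_toFun := Φ.continuous.comp ((γ.1.continuous.comp continuous_snd).prodMk
        continuous_fst)
      map_zero_left := fun t => hΦ0 _
      map_one_left := fun t => (h1 t).symm
      prop' := fun s y hy => by
        show Φ (γ.1 y, s) = γ.1 y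
        rw [γ.2 y hy, hΦz s] }

section Fix

variable {c : DMC φ₁ φ₂ → HFib q y₀}
  (hc₁ : ∀ z : HFib p₁ y₀,
      (c (Quot.mk _ (.inl (.inl z)))).1.1 = Quot.mk _ (.inl (.inl z.1.1)) ∧
        (c (Quot.mk _ (.inl (.inl z)))).1.2 = z.1.2)
  (hc₂ : ∀ z : HFib p₂ y₀,
      (c (Quot.mk _ (.inr z))).1.1 = Quot.mk _ (.inr z.1.1) ∧
        (c (Quot.mk _ (.inr z))).1.2 = z.1.2)
  (hc₀ : ∀ (z : HFib p₀ y₀) (t : I),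
      (c (Quot.mk _ (.inl (.inr (z, t))))).1.1 = Quot.mk _ (.inl (.inr (z.1.1, t))) ∧
        (c (Quot.mk _ (.inl (.inr (z, t))))).1.2 = z.1.2)

include hc₁ hc₂ hc₀ in
lemma exists_deform_fix (x : DMC φ₁ φ₂) :
    ∃ (t₀ : ℝ) (ht0 : 0 < t₀) (ht1 : t₀ < 1),
      (∀ s, cyl φ₁ φ₂ t₀ ht0.le ht1.le x s = x) ∧
      (∀ s, cyl f g t₀ ht0.le ht1.le (c x).1.1 s = (c x).1.1) := by
  induction x using Quot.ind with
  | _ a =>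
    rcases a with (z | ⟨z, t⟩) | z
    · refine ⟨1/2, by norm_num, by norm_num, fun s => cyl_mk₁ φ₁ φ₂ _ _ z s, fun s => ?_⟩
      rw [(hc₁ z).1, cyl_mk₁]
    · by_cases ht0 : (t : ℝ) = 0
      · have ht : t = 0 := Subtype.ext (by simpa using ht0)
        subst ht
        have hx : Quot.mk (CylRel φ₁ φ₂) (.inl (.inr (z, 0))) =
            Quot.mk _ (.inl (.inl (φ₁ z))) := Quot.sound (CylRel.zero z)
        rw [hx]
        refine ⟨1/2, by norm_num, by norm_num, fun s => cyl_mk₁ φ₁ φ₂ _ _ (φ₁ z) s, fun s => ?_⟩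
        rw [(hc₁ (φ₁ z)).1, cyl_mk₁]
      · by_cases ht1 : (t : ℝ) = 1
        · have ht : t = 1 := Subtype.ext (by simpa using ht1)
          subst ht
          have hx : Quot.mk (CylRel φ₁ φ₂) (.inl (.inr (z, 1))) =
              Quot.mk _ (.inr (φ₂ z)) := Quot.sound (CylRel.one z)
          rw [hx]
          refine ⟨1/2, by norm_num, by norm_num, fun s => cyl_mk₂ φ₁ φ₂ _ _ (φ₂ z) s,
            fun s => ?_⟩
          rw [(hc₂ (φ₂ z)).1, cyl_mk₂]
        · have htpos : 0 < (t : ℝ) := lt_of_le_of_ne t.2.1 (Ne.symm ht0)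
          have htlt : (t : ℝ) < 1 := lt_of_le_of_ne t.2.2 ht1
          refine ⟨(t : ℝ), htpos, htlt,
            fun s => cyl_fix_mid φ₁ φ₂ htpos.le htlt.le z t rfl s, fun s => ?_⟩
          rw [(hc₀ z t).1, cyl_fix_mid f g htpos.le htlt.le z.1.1 t rfl s]
    · refine ⟨1/2, by norm_num, by norm_num, fun s => cyl_mk₂ φ₁ φ₂ _ _ z s, fun s => ?_⟩
      rw [(hc₂ z).1, cyl_mk₂]

end Fix

end PuppeAux

end Main


open scoped unitInterval

/-- Puppe's theorem for homotopy pushouts: given a diagram `X₁ ← X₀ → X₂` of spaces over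
`Y`, the canonical map from the homotopy pushout of the homotopy fibers to the homotopy
fiber of the canonical map on homotopy pushouts is a weak homotopy equivalence. -/
theorem puppe_hocolim_of_homotopy_fibers
    (X₀ X₁ X₂ Y : Type) [TopologicalSpace X₀] [TopologicalSpace X₁] [TopologicalSpace X₂]
    [TopologicalSpace Y]
    (f : X₀ → X₁) (g : X₀ → X₂) (hf : Continuous f) (hg : Continuous g)
    (p₀ : X₀ → Y) (p₁ : X₁ → Y) (p₂ : X₂ → Y)
    (hp₀ : Continuous p₀) (hp₁ : Continuous p₁) (hp₂ : Continuous p₂)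
    (hcomm₁ : p₁ ∘ f = p₀) (hcomm₂ : p₂ ∘ g = p₀) (y₀ : Y)
    -- the canonical map `q` from the homotopy pushout of the `Xᵢ` to `Y`
    (q : DMC f g → Y) (hq : Continuous q)
    (hq₁ : ∀ x : X₁, q (Quot.mk _ (.inl (.inl x))) = p₁ x)
    (hq₂ : ∀ x : X₂, q (Quot.mk _ (.inr x)) = p₂ x)
    (hq₀ : ∀ (x : X₀) (t : I), q (Quot.mk _ (.inl (.inr (x, t)))) = p₀ x)
    -- the canonical maps between homotopy fibers induced by `f` and `g`
    (φ₁ : HFib p₀ y₀ → HFib p₁ y₀) (φ₂ : HFib p₀ y₀ → HFib p₂ y₀)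
    (hφ₁c : Continuous φ₁) (hφ₂c : Continuous φ₂)
    (hφ₁ : ∀ z : HFib p₀ y₀, (φ₁ z).1.1 = f z.1.1 ∧ (φ₁ z).1.2 = z.1.2)
    (hφ₂ : ∀ z : HFib p₀ y₀, (φ₂ z).1.1 = g z.1.1 ∧ (φ₂ z).1.2 = z.1.2)
    -- the canonical map from the homotopy pushout of the fibers to the fiber `F`
    (c : DMC φ₁ φ₂ → HFib q y₀) (hc : Continuous c)
    (hc₁ : ∀ z : HFib p₁ y₀,
      (c (Quot.mk _ (.inl (.inl z)))).1.1 = Quot.mk _ (.inl (.inl z.1.1)) ∧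
        (c (Quot.mk _ (.inl (.inl z)))).1.2 = z.1.2)
    (hc₂ : ∀ z : HFib p₂ y₀,
      (c (Quot.mk _ (.inr z))).1.1 = Quot.mk _ (.inr z.1.1) ∧
        (c (Quot.mk _ (.inr z))).1.2 = z.1.2)
    (hc₀ : ∀ (z : HFib p₀ y₀) (t : I),
      (c (Quot.mk _ (.inl (.inr (z, t))))).1.1 = Quot.mk _ (.inl (.inr (z.1.1, t))) ∧
        (c (Quot.mk _ (.inl (.inr (z, t))))).1.2 = z.1.2) :
    IsWeakHomotopyEquiv (⟨c, hc⟩ : C(DMC φ₁ φ₂, HFib q y₀)) := by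
  classical
  by_cases hemp : Nonempty (DMC φ₁ φ₂)
  case neg =>
    have hE : IsEmpty (HFib q y₀) := by
      constructor
      intro z
      apply hemp
      obtain ⟨a, ha⟩ := Quot.exists_rep z.1.1
      rcases a with (x | ⟨x, t⟩) | x
      · exact ⟨Quot.mk _ (.inl (.inl ⟨(x, z.1.2), ⟨by rw [z.2.1, ← ha, hq₁], z.2.2⟩⟩))⟩
      · exact ⟨Quot.mk _ (.inl (.inr (⟨(x, z.1.2), ⟨by rw [z.2.1, ← ha, hq₀], z.2.2⟩⟩, t)))⟩
      · exact ⟨Quot.mk _ (.inr ⟨(x, z.1.2), ⟨by rw [z.2.1, ← ha, hq₂], z.2.2⟩⟩)⟩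
    have hD : IsEmpty (DMC φ₁ φ₂) := not_nonempty_iff.mp hemp
    constructor
    · constructor
      · intro a b _
        obtain ⟨xa, -⟩ := Quotient.exists_rep a
        exact (hD.false xa).elim
      · intro d
        obtain ⟨zy, -⟩ := Quotient.exists_rep d
        exact (hE.false zy).elim
    · intro n x hn
      exact (hD.false x).elim
  case pos =>
  obtain ⟨junkB⟩ := hemp
  have h2a : (0:ℝ) < 1/2 := by norm_num
  have h2b : (1:ℝ)/2 < 1 := by norm_num
  set cm : C(DMC φ₁ φ₂, HFib q y₀) := ⟨c, hc⟩ with hcm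
  constructor
  · -- path components
    have hEc : Continuous (PuppeAux.ee q φ₁ φ₂ junkB (1/2)) :=
      PuppeAux.continuous_ee hf hg hcomm₁ hcomm₂ hq₁ hq₂ hq₀ hφ₁ hφ₂ junkB h2a h2b
    have h12 : ∀ w : DMC φ₁ φ₂, Joined w (PuppeAux.ee q φ₁ φ₂ junkB (1/2) (c w)) := by
      intro w
      have hcalc := PuppeAux.ee_comp_c hq₁ hq₂ hq₀ hc₁ hc₂ hc₀ junkB h2a h2b
        hcomm₁ hcomm₂ hφ₁ hφ₂ w
      exact ⟨{ toFun := fun s => PuppeAux.cyl φ₁ φ₂ (1/2) h2a.le h2b.le w s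
               continuous_toFun := (PuppeAux.cyl φ₁ φ₂ (1/2) h2a.le h2b.le w).continuous
               source' := PuppeAux.cyl_zero φ₁ φ₂ h2a.le h2b.le w
               target' := hcalc.symm }⟩
    constructor
    · intro a b hab
      obtain ⟨xa, rfl⟩ := Quotient.exists_rep a
      obtain ⟨xb, rfl⟩ := Quotient.exists_rep b
      simp only [zerothMap, Quotient.map_mk] at hab
      have hj : Joined (cm xa) (cm xb) := Quotient.exact hab
      apply Quotient.sound
      have hj2 : Joined (PuppeAux.ee q φ₁ φ₂ junkB (1/2) (c xa))
          (PuppeAux.ee q φ₁ φ₂ junkB (1/2) (c xb)) := hj.map hEc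
      exact (h12 xa).trans (hj2.trans (h12 xb).symm)
    · intro d
      obtain ⟨zy, rfl⟩ := Quotient.exists_rep d
      refine ⟨⟦PuppeAux.ee q φ₁ φ₂ junkB (1/2) zy⟧, ?_⟩
      simp only [zerothMap, Quotient.map_mk]
      apply Quotient.sound
      have hcc := PuppeAux.c_comp_ee hq₁ hq₂ hq₀ hc₁ hc₂ hc₀ junkB h2a h2b
        hcomm₁ hcomm₂ zy
      have hjoin : Joined zy (c (PuppeAux.ee q φ₁ φ₂ junkB (1/2) zy)) :=
        ⟨{ toFun := fun s => PuppeAux.Phiq hq₀ h2a.le h2b.le (zy, s)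
           continuous_toFun := (PuppeAux.Phiq hq₀ h2a.le h2b.le).continuous.comp
             (continuous_const.prodMk continuous_id)
           source' := by
             apply Subtype.ext
             apply Prod.ext
             · exact PuppeAux.cyl_zero f g h2a.le h2b.le zy.1.1
             · rfl
           target' := by
             apply Subtype.ext
             apply Prod.ext
             · exact hcc.1.symm
             · exact hcc.2.symm }⟩
      exact hjoin.symm
  · -- homotopy groups
    intro n x hn
    obtain ⟨t₀, ht0, ht1, hfixB, hfixA⟩ :=
      PuppeAux.exists_deform_fix (c := c) hc₁ hc₂ hc₀ x
    have hEc : Continuous (PuppeAux.ee q φ₁ φ₂ junkB t₀) :=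
      PuppeAux.continuous_ee hf hg hcomm₁ hcomm₂ hq₁ hq₂ hq₀ hφ₁ hφ₂ junkB ht0 ht1
    have hF1 : ∀ b : DMC φ₁ φ₂, PuppeAux.ee q φ₁ φ₂ junkB t₀ (c b)
        = PuppeAux.cyl φ₁ φ₂ t₀ ht0.le ht1.le b 1 :=
      PuppeAux.ee_comp_c hq₁ hq₂ hq₀ hc₁ hc₂ hc₀ junkB ht0 ht1 hcomm₁ hcomm₂ hφ₁ hφ₂
    have hF2 := PuppeAux.c_comp_ee hq₁ hq₂ hq₀ hc₁ hc₂ hc₀ junkB ht0 ht1 hcomm₁ hcomm₂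
    have hecx : PuppeAux.ee q φ₁ φ₂ junkB t₀ (c x) = x := by
      rw [hF1 x]
      exact hfixB 1
    let Em : C(HFib q y₀, DMC φ₁ φ₂) := ⟨PuppeAux.ee q φ₁ φ₂ junkB t₀, hEc⟩
    let PhiB : C(DMC φ₁ φ₂ × I, DMC φ₁ φ₂) :=
      ⟨fun p => PuppeAux.cyl φ₁ φ₂ t₀ ht0.le ht1.le p.1 p.2,
        ContinuousEval.continuous_eval.comp
          (((PuppeAux.continuous_cyl φ₁ φ₂ ht0.le ht1.le).comp continuous_fst).prodMk
            continuous_snd)⟩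
    let χ : GenLoop (Fin n) (HFib q y₀) (cm x) → GenLoop (Fin n) (DMC φ₁ φ₂) x := fun δ =>
      ⟨Em.comp δ.1, fun yy hy => by
        show PuppeAux.ee q φ₁ φ₂ junkB t₀ (δ.1 yy) = x
        rw [δ.2 yy hy]
        exact hecx⟩
    have keyB : ∀ γ : GenLoop (Fin n) (DMC φ₁ φ₂) x,
        GenLoop.Homotopic γ (χ (GenLoop.push cm γ)) := by
      intro γ
      apply PuppeAux.deform_homotopic PhiB
        (fun w => PuppeAux.cyl_zero φ₁ φ₂ ht0.le ht1.le w) hfixB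
      intro t
      show PuppeAux.ee q φ₁ φ₂ junkB t₀ (c (γ.1 t)) = PhiB (γ.1 t, 1)
      exact hF1 (γ.1 t)
    have keyQ : ∀ δ : GenLoop (Fin n) (HFib q y₀) (cm x),
        GenLoop.Homotopic δ (GenLoop.push cm (χ δ)) := by
      intro δ
      apply PuppeAux.deform_homotopic (PuppeAux.Phiq hq₀ ht0.le ht1.le)
        (fun w => Subtype.ext (Prod.ext (PuppeAux.cyl_zero f g ht0.le ht1.le w.1.1) rfl))
        (fun s => Subtype.ext (Prod.ext (hfixA s) rfl))
      intro t
      show c (PuppeAux.ee q φ₁ φ₂ junkB t₀ (δ.1 t))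
        = PuppeAux.Phiq hq₀ ht0.le ht1.le (δ.1 t, 1)
      exact Subtype.ext (Prod.ext (hF2 (δ.1 t)).1 (hF2 (δ.1 t)).2)
    constructor
    · intro a b hab
      obtain ⟨γa, rfl⟩ := Quotient.exists_rep a
      obtain ⟨γb, rfl⟩ := Quotient.exists_rep b
      simp only [piMap, Quotient.map_mk] at hab
      have hab' : GenLoop.Homotopic (GenLoop.push cm γa) (GenLoop.push cm γb) :=
        Quotient.exact hab
      have hmap : GenLoop.Homotopic (χ (GenLoop.push cm γa)) (χ (GenLoop.push cm γb)) :=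
        hab'.map fun F => F.compContinuousMap Em
      exact Quotient.sound ((keyB γa).trans (hmap.trans (keyB γb).symm))
    · intro d
      obtain ⟨δ, rfl⟩ := Quotient.exists_rep d
      refine ⟨⟦χ δ⟧, ?_⟩
      simp only [piMap, Quotient.map_mk]
      exact Quotient.sound (keyQ δ).symm
end

section
/- Consider the maps of graded rings $\phi : H^*(BSO(3) \times BSO(3); \mathbb{Z}) \oplus H^*(BS^1 \times BSO(3); \mathbb{Z}) \to H^*(BSO(3); \mathbb{Z})$ given by $\phi(a, b) = \Delta^*(a) - j^*(b)$, where $\Delta : SO(3) \to SO(3) \times SO(3)$ is the diagonal and $j : SO(3) \to S^1 \times SO(3)$ is the inclusion of the second factor. The kernel of $\phi$ is isomorphic as a graded ring to $\mathbb{Z}[T, X_1, X_2, Y_1, Y_2, Z] / \langle T(X_i - Y_i),\ TZ,\ 2X_1,\ 2Y_1,\ 2Z,\ Z^2 \rangle$ with degrees $|T| = 2$, $|X_i| = |Y_i| = i + 2$, $|Z| = 5$. -/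
open MvPolynomial

noncomputable section

/-- Relations `2X₁, 2Y₁, 2Z, Z²` (variables `0 ↦ X₁ (deg 3)`, `1 ↦ X₂ (deg 4)`,
`2 ↦ Y₁ (deg 3)`, `3 ↦ Y₂ (deg 4)`, `4 ↦ Z (deg 5)`). -/
def I₅ : Ideal (MvPolynomial (Fin 5) ℤ) :=
  Ideal.span {C 2 * X 0, C 2 * X 2, C 2 * X 4, X 4 ^ 2}

/-- `H^*(BSO(3) × BSO(3); ℤ) = ℤ[X₁,X₂,Y₁,Y₂,Z]/(2X₁, 2Y₁, 2Z, Z²)`. -/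
abbrev HBSO3xBSO3 : Type := MvPolynomial (Fin 5) ℤ ⧸ I₅

/-- Relation `2Y₁` (variables `0 ↦ T (deg 2)`, `1 ↦ Y₁ (deg 3)`, `2 ↦ Y₂ (deg 4)`). -/
def I₃ : Ideal (MvPolynomial (Fin 3) ℤ) := Ideal.span {C 2 * X 1}

/-- `H^*(BS¹ × BSO(3); ℤ) = ℤ[T,Y₁,Y₂]/(2Y₁)`. -/
abbrev HBS1xBSO3 : Type := MvPolynomial (Fin 3) ℤ ⧸ I₃

/-- Relation `2W₁` (variables `0 ↦ W₁ (deg 3)`, `1 ↦ W₂ (deg 4)`). -/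
def I₂ : Ideal (MvPolynomial (Fin 2) ℤ) := Ideal.span {C 2 * X 0}

/-- `H^*(BSO(3); ℤ) = ℤ[W₁,W₂]/(2W₁)`. -/
abbrev HBSO3 : Type := MvPolynomial (Fin 2) ℤ ⧸ I₂

/-- Relations `T(Xᵢ-Yᵢ), TZ, 2X₁, 2Y₁, 2Z, Z²` (variables `0 ↦ T (deg 2)`,
`1 ↦ X₁ (deg 3)`, `2 ↦ X₂ (deg 4)`, `3 ↦ Y₁ (deg 3)`, `4 ↦ Y₂ (deg 4)`,
`5 ↦ Z (deg 5)`). -/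
def I₆ : Ideal (MvPolynomial (Fin 6) ℤ) :=
  Ideal.span {X 0 * (X 1 - X 3), X 0 * (X 2 - X 4), X 0 * X 5,
    C 2 * X 1, C 2 * X 3, C 2 * X 5, X 5 ^ 2}

/-- `ℤ[T,X₁,X₂,Y₁,Y₂,Z]/⟨T(Xᵢ-Yᵢ), TZ, 2X₁, 2Y₁, 2Z, Z²⟩`. -/
abbrev HBG : Type := MvPolynomial (Fin 6) ℤ ⧸ I₆

end


set_option maxHeartbeats 1000000

noncomputable section KerMVAux

@[simp] lemma cv6_2 {α : Type*} (a b c d e f : α) : ![a,b,c,d,e,f] 2 = c := rfl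
@[simp] lemma cv6_3 {α : Type*} (a b c d e f : α) : ![a,b,c,d,e,f] 3 = d := rfl
@[simp] lemma cv6_4 {α : Type*} (a b c d e f : α) : ![a,b,c,d,e,f] 4 = e := rfl
@[simp] lemma cv6_5 {α : Type*} (a b c d e f : α) : ![a,b,c,d,e,f] 5 = f := rfl
@[simp] lemma cv5_2 {α : Type*} (a b c d e : α) : ![a,b,c,d,e] 2 = c := rfl
@[simp] lemma cv5_3 {α : Type*} (a b c d e : α) : ![a,b,c,d,e] 3 = d := rfl
@[simp] lemma cv5_4 {α : Type*} (a b c d e : α) : ![a,b,c,d,e] 4 = e := rfl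
@[simp] lemma cv3_2 {α : Type*} (a b c : α) : ![a,b,c] 2 = c := rfl


def mvα : MvPolynomial (Fin 6) ℤ →ₐ[ℤ] MvPolynomial (Fin 5) ℤ :=
  aeval ![0, X 0, X 1, X 2, X 3, X 4]
def mvβ : MvPolynomial (Fin 6) ℤ →ₐ[ℤ] MvPolynomial (Fin 3) ℤ :=
  aeval ![X 0, X 1, X 2, X 1, X 2, 0]
def mvδ : MvPolynomial (Fin 5) ℤ →ₐ[ℤ] MvPolynomial (Fin 3) ℤ :=
  aeval ![X 1, X 2, X 1, X 2, 0]

lemma mvβ_rename : mvβ.comp (rename (![1,2,3,4,5] : Fin 5 → Fin 6)) = mvδ := by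
  apply MvPolynomial.algHom_ext; intro i
  fin_cases i <;> simp [mvβ, mvδ]

lemma aux_sub_aeval_mem {n : ℕ} (v : Fin n → MvPolynomial (Fin n) ℤ)
    (J : Ideal (MvPolynomial (Fin n) ℤ)) (h : ∀ i, X i - v i ∈ J)
    (p : MvPolynomial (Fin n) ℤ) : p - aeval v p ∈ J := by
  induction p using MvPolynomial.induction_on with
  | C a => simp
  | add p q hp hq =>
      have : p + q - aeval v (p + q) = (p - aeval v p) + (q - aeval v q) := by
        rw [map_add]; ring
      rw [this]; exact J.add_mem hp hq
  | mul_X p i hp =>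
      have : p * X i - aeval v (p * X i)
          = (p - aeval v p) * X i + aeval v p * (X i - v i) := by
        rw [map_mul, aeval_X]; ring
      rw [this]; exact J.add_mem (J.mul_mem_right _ hp) (J.mul_mem_left _ (h i))

lemma aux_map_span_mem {R S : Type*} [CommRing R] [CommRing S] (f : R →+* S)
    (s : Set R) (J : Ideal S) (h : ∀ x ∈ s, f x ∈ J) {a : R}
    (ha : a ∈ Ideal.span s) : f a ∈ J := by
  refine Submodule.span_induction (p := fun x _ => f x ∈ J) h (by simp)
    (fun x y _ _ hx hy => show f (x + y) ∈ J by rw [map_add]; exact J.add_mem hx hy)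
    (fun r x _ hx => show f (r • x) ∈ J by
      rw [smul_eq_mul, map_mul]; exact J.mul_mem_left _ hx) ha

lemma key_inj (p : MvPolynomial (Fin 6) ℤ) (hα : mvα p ∈ I₅) (hβ : mvβ p ∈ I₃) :
    p ∈ I₆ := by
  have hc1 : (rename (![1,2,3,4,5] : Fin 5 → Fin 6)).comp mvα
      = aeval ![0, X 1, X 2, X 3, X 4, X 5] := by
    apply MvPolynomial.algHom_ext; intro i
    fin_cases i <;> simp [mvα]
  set p₀ : MvPolynomial (Fin 6) ℤ := rename (![1,2,3,4,5] : Fin 5 → Fin 6) (mvα p) with hp₀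
  have h1 : p - p₀ ∈ Ideal.span {(X 0 : MvPolynomial (Fin 6) ℤ)} := by
    have := aux_sub_aeval_mem ![0, X 1, X 2, X 3, X 4, X 5]
      (Ideal.span {(X 0 : MvPolynomial (Fin 6) ℤ)}) ?_ p
    · rwa [hp₀, show (rename (![1,2,3,4,5] : Fin 5 → Fin 6)) (mvα p)
        = aeval ![0, X 1, X 2, X 3, X 4, X 5] p from AlgHom.congr_fun hc1 p]
    · intro i; fin_cases i <;> simp [Ideal.mem_span_singleton]
  obtain ⟨q, hq⟩ := Ideal.mem_span_singleton.1 h1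
  have hp₀mem : p₀ ∈ I₆ := by
    refine aux_map_span_mem (rename (![1,2,3,4,5] : Fin 5 → Fin 6)).toRingHom _ I₆ ?_ hα
    rintro x (rfl | rfl | rfl | rfl) <;>
    · simp only [AlgHom.toRingHom_eq_coe, RingHom.coe_coe, map_mul, map_pow, rename_C, rename_X]
      exact Ideal.subset_span (by simp [I₆])
  have h2 : q - aeval ![X 0, X 3, X 4, X 3, X 4, 0] q ∈
      Ideal.span {(X 1 - X 3 : MvPolynomial (Fin 6) ℤ), X 2 - X 4, X 5} := by
    apply aux_sub_aeval_mem
    intro i; fin_cases i <;> simp <;> exact Ideal.subset_span (by simp)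
  have h3 : X 0 * (q - aeval ![X 0, X 3, X 4, X 3, X 4, 0] q) ∈ I₆ := by
    refine Submodule.span_induction
      (p := fun a _ => X 0 * a ∈ I₆) ?_ (by simp)
      (fun x y _ _ hx hy => show X 0 * (x + y) ∈ I₆ by
        rw [mul_add]; exact I₆.add_mem hx hy)
      (fun r x _ hx => show X 0 * (r • x) ∈ I₆ by
        rw [smul_eq_mul, show X 0 * (r * x) = r * (X 0 * x) by ring]
        exact I₆.mul_mem_left _ hx) h2
    rintro x (rfl | rfl | rfl) <;> exact Ideal.subset_span (by simp [I₆])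
  have hc2 : (rename (![0,3,4] : Fin 3 → Fin 6)).comp mvβ
      = aeval ![X 0, X 3, X 4, X 3, X 4, 0] := by
    apply MvPolynomial.algHom_ext; intro i
    fin_cases i <;> simp [mvβ]
  have hβ0 : mvβ p₀ ∈ I₃ := by
    rw [hp₀, show mvβ ((rename (![1,2,3,4,5] : Fin 5 → Fin 6)) (mvα p)) = mvδ (mvα p)
      from AlgHom.congr_fun mvβ_rename (mvα p)]
    refine aux_map_span_mem mvδ.toRingHom _ I₃ ?_ hα
    rintro x (rfl | rfl | rfl | rfl) <;>
      simp only [AlgHom.toRingHom_eq_coe, RingHom.coe_coe]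
    · rw [show mvδ (C 2 * X 0) = C 2 * X 1 by simp [mvδ, algebraMap_eq, map_ofNat]]
      exact Ideal.subset_span rfl
    · rw [show mvδ (C 2 * X 2) = C 2 * X 1 by simp [mvδ, algebraMap_eq, map_ofNat]]
      exact Ideal.subset_span rfl
    · rw [show mvδ (C 2 * X 4) = 0 by simp [mvδ]]
      exact I₃.zero_mem
    · rw [show mvδ (X 4 ^ 2) = 0 by simp [mvδ]]
      exact I₃.zero_mem
  have hβq : mvβ (X 0 * q) ∈ I₃ := by
    have : mvβ (X 0 * q) = mvβ p - mvβ p₀ := by rw [← map_sub, hq]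
    rw [this]; exact I₃.sub_mem hβ hβ0
  have h4 : X 0 * aeval ![X 0, X 3, X 4, X 3, X 4, 0] q ∈ I₆ := by
    have e1 : rename (![0,3,4] : Fin 3 → Fin 6) (mvβ (X 0 * q))
        = X 0 * aeval ![X 0, X 3, X 4, X 3, X 4, 0] q := by
      rw [map_mul, show mvβ (X 0) = X 0 from by simp [mvβ], map_mul,
        ← AlgHom.congr_fun hc2 q]
      simp
    rw [← e1]
    refine aux_map_span_mem (rename (![0,3,4] : Fin 3 → Fin 6)).toRingHom _ I₆ ?_ hβq
    rintro x rfl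
    simp only [AlgHom.toRingHom_eq_coe, RingHom.coe_coe, map_mul, rename_C, rename_X]
    exact Ideal.subset_span (by simp [I₆])
  have : p = p₀ + X 0 * (q - aeval ![X 0, X 3, X 4, X 3, X 4, 0] q)
      + X 0 * aeval ![X 0, X 3, X 4, X 3, X 4, 0] q := by
    rw [mul_sub, ← hq]; ring
  rw [this]
  exact I₆.add_mem (I₆.add_mem hp₀mem h3) h4


def mvD : MvPolynomial (Fin 5) ℤ →ₐ[ℤ] MvPolynomial (Fin 2) ℤ :=
  aeval ![X 0, X 1, X 0, X 1, 0]
def mvJ : MvPolynomial (Fin 3) ℤ →ₐ[ℤ] MvPolynomial (Fin 2) ℤ :=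
  aeval ![0, X 0, X 1]

lemma key_surj (A : MvPolynomial (Fin 5) ℤ) (B : MvPolynomial (Fin 3) ℤ)
    (h : mvD A - mvJ B ∈ I₂) :
    ∃ P : MvPolynomial (Fin 6) ℤ, mvα P = A ∧ B - mvβ P ∈ I₃ := by
  have hJδ : mvJ.comp mvδ = mvD := by
    apply MvPolynomial.algHom_ext; intro i
    fin_cases i <;> simp [mvJ, mvδ, mvD]
  have hE : mvJ (B - mvδ A) ∈ I₂ := by
    rw [map_sub, show mvJ (mvδ A) = mvD A from AlgHom.congr_fun hJδ A,
      show mvJ B - mvD A = -(mvD A - mvJ B) by ring]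
    exact I₂.neg_mem h
  obtain ⟨h0, hh0⟩ := Ideal.mem_span_singleton.1 (show mvJ (B - mvδ A) ∈ Ideal.span {C 2 * X 0} from hE)
  set h' : MvPolynomial (Fin 3) ℤ := rename (![1,2] : Fin 2 → Fin 3) h0 with hh'
  set E' : MvPolynomial (Fin 3) ℤ := B - mvδ A - C 2 * X 1 * h' with hE'
  have hJrename : mvJ.comp (rename (![1,2] : Fin 2 → Fin 3))
      = AlgHom.id ℤ (MvPolynomial (Fin 2) ℤ) := by
    apply MvPolynomial.algHom_ext; intro i
    fin_cases i <;> simp [mvJ]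
  have hJE' : mvJ E' = 0 := by
    rw [hE', map_sub, hh0, map_mul, map_mul,
      show mvJ (C 2) = C 2 by simp [mvJ, algebraMap_eq, map_ofNat],
      show mvJ (X 1) = X 0 by simp [mvJ],
      show mvJ h' = h0 from AlgHom.congr_fun hJrename h0]
    ring
  have hσ : (rename (![1,2] : Fin 2 → Fin 3)).comp mvJ
      = aeval ![0, X 1, X 2] := by
    apply MvPolynomial.algHom_ext; intro i
    fin_cases i <;> simp [mvJ]
  have hmem : E' ∈ Ideal.span {(X 0 : MvPolynomial (Fin 3) ℤ)} := by
    have h5 := aux_sub_aeval_mem ![0, X 1, X 2]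
      (Ideal.span {(X 0 : MvPolynomial (Fin 3) ℤ)}) ?_ E'
    · have e : aeval ![0, X 1, X 2] E' = (0 : MvPolynomial (Fin 3) ℤ) := by
        have h6 := AlgHom.congr_fun hσ E'
        rw [AlgHom.comp_apply, hJE', map_zero] at h6
        exact h6.symm
      rwa [e, sub_zero] at h5
    · intro i; fin_cases i <;> simp [Ideal.mem_span_singleton]
  obtain ⟨c, hc⟩ := Ideal.mem_span_singleton.1 hmem
  refine ⟨rename (![1,2,3,4,5] : Fin 5 → Fin 6) A
    + X 0 * rename (![0,3,4] : Fin 3 → Fin 6) c, ?_, ?_⟩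
  · have hαid : mvα.comp (rename (![1,2,3,4,5] : Fin 5 → Fin 6))
        = AlgHom.id ℤ (MvPolynomial (Fin 5) ℤ) := by
      apply MvPolynomial.algHom_ext; intro i
      fin_cases i <;> simp [mvα]
    rw [map_add, map_mul, show mvα (X 0) = 0 by simp [mvα], zero_mul, add_zero]
    exact AlgHom.congr_fun hαid A
  · have hβ034 : mvβ.comp (rename (![0,3,4] : Fin 3 → Fin 6))
        = AlgHom.id ℤ (MvPolynomial (Fin 3) ℤ) := by
      apply MvPolynomial.algHom_ext; intro i
      fin_cases i <;> simp [mvβ]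
    rw [map_add, show mvβ ((rename (![1,2,3,4,5] : Fin 5 → Fin 6)) A) = mvδ A
        from AlgHom.congr_fun mvβ_rename A,
      map_mul, show mvβ (X 0) = X 0 by simp [mvβ],
      show mvβ ((rename (![0,3,4] : Fin 3 → Fin 6)) c) = c from AlgHom.congr_fun hβ034 c,
      show B - (mvδ A + X 0 * c) = C 2 * X 1 * h' by rw [← hc, hE']; ring]
    exact Ideal.mul_mem_right _ _ (Ideal.subset_span rfl)


def Fh : MvPolynomial (Fin 6) ℤ →+* HBSO3xBSO3 × HBS1xBSO3 :=
  ((Ideal.Quotient.mk I₅).comp mvα.toRingHom).prod ((Ideal.Quotient.mk I₃).comp mvβ.toRingHom)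

lemma Fh_apply (p : MvPolynomial (Fin 6) ℤ) :
    Fh p = (Ideal.Quotient.mk I₅ (mvα p), Ideal.Quotient.mk I₃ (mvβ p)) := rfl

lemma Fh_ker : ∀ a ∈ I₆, Fh a = 0 := by
  intro a ha
  rw [← Ideal.mem_bot]
  refine aux_map_span_mem Fh _ ⊥ ?_ ha
  rintro x (rfl | rfl | rfl | rfl | rfl | rfl | rfl) <;>
    rw [Ideal.mem_bot, Fh_apply, Prod.mk_eq_zero] <;> constructor
  · rw [show mvα (X 0 * (X 1 - X 3)) = 0 by simp [mvα], map_zero]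
  · rw [show mvβ (X 0 * (X 1 - X 3)) = 0 by simp [mvβ], map_zero]
  · rw [show mvα (X 0 * (X 2 - X 4)) = 0 by simp [mvα], map_zero]
  · rw [show mvβ (X 0 * (X 2 - X 4)) = 0 by simp [mvβ], map_zero]
  · rw [show mvα (X 0 * X 5) = 0 by simp [mvα], map_zero]
  · rw [show mvβ (X 0 * X 5) = 0 by simp [mvβ], map_zero]
  · rw [Ideal.Quotient.eq_zero_iff_mem,
      show mvα (C 2 * X 1) = C 2 * X 0 by simp [mvα, algebraMap_eq, map_ofNat]]
    exact Ideal.subset_span (by simp)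
  · rw [Ideal.Quotient.eq_zero_iff_mem,
      show mvβ (C 2 * X 1) = C 2 * X 1 by simp [mvβ, algebraMap_eq, map_ofNat]]
    exact Ideal.subset_span rfl
  · rw [Ideal.Quotient.eq_zero_iff_mem,
      show mvα (C 2 * X 3) = C 2 * X 2 by simp [mvα, algebraMap_eq, map_ofNat]]
    exact Ideal.subset_span (by simp)
  · rw [Ideal.Quotient.eq_zero_iff_mem,
      show mvβ (C 2 * X 3) = C 2 * X 1 by simp [mvβ, algebraMap_eq, map_ofNat]]
    exact Ideal.subset_span rfl
  · rw [Ideal.Quotient.eq_zero_iff_mem,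
      show mvα (C 2 * X 5) = C 2 * X 4 by simp [mvα, algebraMap_eq, map_ofNat]]
    exact Ideal.subset_span (by simp)
  · rw [show mvβ (C 2 * X 5) = 0 by simp [mvβ], map_zero]
  · rw [Ideal.Quotient.eq_zero_iff_mem, show mvα (X 5 ^ 2) = X 4 ^ 2 by simp [mvα]]
    exact Ideal.subset_span (by simp)
  · rw [show mvβ (X 5 ^ 2) = 0 by simp [mvβ], map_zero]

end KerMVAux

/-- The kernel of the Mayer–Vietoris difference map
`φ : H^*(BSO(3)×BSO(3);ℤ) ⊕ H^*(BS¹×BSO(3);ℤ) → H^*(BSO(3);ℤ)`,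
`φ(a,b) = Δ^*(a) - j^*(b)`, is isomorphic as a (graded) ring to
`ℤ[T,X₁,X₂,Y₁,Y₂,Z]/⟨T(Xᵢ-Yᵢ), TZ, 2X₁, 2Y₁, 2Z, Z²⟩`, the isomorphism respecting the
degrees of the canonical generators.  Here `Δ^*` (restriction along the diagonal) sends
`Xᵢ, Yᵢ ↦ Wᵢ`, `Z ↦ 0`, and `j^*` (restriction along the inclusion of the second
factor) sends `T ↦ 0`, `Yᵢ ↦ Wᵢ`. -/
theorem ker_mayerVietoris_map_iso_HBG
    (Δs : HBSO3xBSO3 →+* HBSO3)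
    (hΔ₁ : Δs (Ideal.Quotient.mk I₅ (X 0)) = Ideal.Quotient.mk I₂ (X 0))
    (hΔ₂ : Δs (Ideal.Quotient.mk I₅ (X 1)) = Ideal.Quotient.mk I₂ (X 1))
    (hΔ₃ : Δs (Ideal.Quotient.mk I₅ (X 2)) = Ideal.Quotient.mk I₂ (X 0))
    (hΔ₄ : Δs (Ideal.Quotient.mk I₅ (X 3)) = Ideal.Quotient.mk I₂ (X 1))
    (hΔ₅ : Δs (Ideal.Quotient.mk I₅ (X 4)) = 0)
    (js : HBS1xBSO3 →+* HBSO3)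
    (hj₁ : js (Ideal.Quotient.mk I₃ (X 0)) = 0)
    (hj₂ : js (Ideal.Quotient.mk I₃ (X 1)) = Ideal.Quotient.mk I₂ (X 0))
    (hj₃ : js (Ideal.Quotient.mk I₃ (X 2)) = Ideal.Quotient.mk I₂ (X 1))
    (K : Subring (HBSO3xBSO3 × HBS1xBSO3))
    (hK : (K : Set (HBSO3xBSO3 × HBS1xBSO3)) = {p | Δs p.1 - js p.2 = 0}) :
    ∃ e : HBG ≃+* ↥K,
      ((e (Ideal.Quotient.mk I₆ (X 0)) : HBSO3xBSO3 × HBS1xBSO3) =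
        (0, Ideal.Quotient.mk I₃ (X 0))) ∧
      ((e (Ideal.Quotient.mk I₆ (X 1)) : HBSO3xBSO3 × HBS1xBSO3) =
        (Ideal.Quotient.mk I₅ (X 0), Ideal.Quotient.mk I₃ (X 1))) ∧
      ((e (Ideal.Quotient.mk I₆ (X 2)) : HBSO3xBSO3 × HBS1xBSO3) =
        (Ideal.Quotient.mk I₅ (X 1), Ideal.Quotient.mk I₃ (X 2))) ∧
      ((e (Ideal.Quotient.mk I₆ (X 3)) : HBSO3xBSO3 × HBS1xBSO3) =
        (Ideal.Quotient.mk I₅ (X 2), Ideal.Quotient.mk I₃ (X 1))) ∧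
      ((e (Ideal.Quotient.mk I₆ (X 4)) : HBSO3xBSO3 × HBS1xBSO3) =
        (Ideal.Quotient.mk I₅ (X 3), Ideal.Quotient.mk I₃ (X 2))) ∧
      ((e (Ideal.Quotient.mk I₆ (X 5)) : HBSO3xBSO3 × HBS1xBSO3) =
        (Ideal.Quotient.mk I₅ (X 4), 0)) := by
  classical
  set Φ₀ : HBG →+* HBSO3xBSO3 × HBS1xBSO3 := Ideal.Quotient.lift I₆ Fh Fh_ker with hΦ₀
  have hΦ₀mk : ∀ p, Φ₀ (Ideal.Quotient.mk I₆ p) = Fh p := fun p => Ideal.Quotient.lift_mk _ _ _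
  -- the two composites to HBSO3 agree
  have hΔβ : Δs.comp ((Ideal.Quotient.mk I₅).comp mvα.toRingHom)
      = js.comp ((Ideal.Quotient.mk I₃).comp mvβ.toRingHom) := by
    apply MvPolynomial.ringHom_ext
    · intro a
      exact RingHom.congr_fun (RingHom.ext_int
        ((Δs.comp ((Ideal.Quotient.mk I₅).comp mvα.toRingHom)).comp C)
        ((js.comp ((Ideal.Quotient.mk I₃).comp mvβ.toRingHom)).comp C)) a
    · intro i
      fin_cases i <;>
        simp [mvα, mvβ, hΔ₁, hΔ₂, hΔ₃, hΔ₄, hΔ₅, hj₁, hj₂, hj₃]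
  have hmem : ∀ x : HBG, Φ₀ x ∈ K := by
    intro x
    obtain ⟨p, rfl⟩ := Ideal.Quotient.mk_surjective x
    rw [← SetLike.mem_coe, hK]
    show Δs (Φ₀ (Ideal.Quotient.mk I₆ p)).1 - js (Φ₀ (Ideal.Quotient.mk I₆ p)).2 = 0
    rw [hΦ₀mk, Fh_apply]
    exact sub_eq_zero.2 (RingHom.congr_fun hΔβ p)
  set Φ : HBG →+* K := Φ₀.codRestrict K hmem with hΦ
  have hΦval : ∀ x : HBG, (Φ x : HBSO3xBSO3 × HBS1xBSO3) = Φ₀ x := fun x => rfl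
  have hinj : Function.Injective Φ := by
    intro x y hxy
    obtain ⟨px, rfl⟩ := Ideal.Quotient.mk_surjective x
    obtain ⟨py, rfl⟩ := Ideal.Quotient.mk_surjective y
    have h0 : Fh (px - py) = 0 := by
      have h1 := congrArg (Subtype.val) hxy
      rw [hΦval, hΦval, hΦ₀mk, hΦ₀mk] at h1
      rw [RingHom.map_sub, h1, sub_self]
    rw [Fh_apply, Prod.mk_eq_zero] at h0
    have h2 := key_inj (px - py) (Ideal.Quotient.eq_zero_iff_mem.1 h0.1)
      (Ideal.Quotient.eq_zero_iff_mem.1 h0.2)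
    exact Ideal.Quotient.eq.2 h2
  have hsurj : Function.Surjective Φ := by
    rintro ⟨⟨a, b⟩, hab⟩
    obtain ⟨A, rfl⟩ := Ideal.Quotient.mk_surjective a
    obtain ⟨B, rfl⟩ := Ideal.Quotient.mk_surjective b
    have hab' : Δs (Ideal.Quotient.mk I₅ A) - js (Ideal.Quotient.mk I₃ B) = 0 := by
      have := hab
      rw [← SetLike.mem_coe, hK] at this
      exact this
    have hΔD : Δs.comp (Ideal.Quotient.mk I₅)
        = (Ideal.Quotient.mk I₂).comp mvD.toRingHom := by
      apply MvPolynomial.ringHom_ext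
      · intro r
        exact RingHom.congr_fun (RingHom.ext_int
          ((Δs.comp (Ideal.Quotient.mk I₅)).comp C)
          (((Ideal.Quotient.mk I₂).comp mvD.toRingHom).comp C)) r
      · intro i
        fin_cases i <;> simp [mvD, hΔ₁, hΔ₂, hΔ₃, hΔ₄, hΔ₅]
    have hjJ : js.comp (Ideal.Quotient.mk I₃)
        = (Ideal.Quotient.mk I₂).comp mvJ.toRingHom := by
      apply MvPolynomial.ringHom_ext
      · intro r
        exact RingHom.congr_fun (RingHom.ext_int
          ((js.comp (Ideal.Quotient.mk I₃)).comp C)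
          (((Ideal.Quotient.mk I₂).comp mvJ.toRingHom).comp C)) r
      · intro i
        fin_cases i <;> simp [mvJ, hj₁, hj₂, hj₃]
    have hDJ : mvD A - mvJ B ∈ I₂ := by
      refine (Ideal.Quotient.eq).1 ?_
      have e1 := RingHom.congr_fun hΔD A
      have e2 := RingHom.congr_fun hjJ B
      simp only [RingHom.comp_apply, AlgHom.toRingHom_eq_coe, RingHom.coe_coe] at e1 e2
      rw [← e1, ← e2]
      exact sub_eq_zero.1 hab'
    obtain ⟨P, hP1, hP2⟩ := key_surj A B hDJ
    refine ⟨Ideal.Quotient.mk I₆ P, ?_⟩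
    apply Subtype.ext
    rw [hΦval, hΦ₀mk, Fh_apply, hP1]
    refine Prod.ext rfl ?_
    show Ideal.Quotient.mk I₃ (mvβ P) = Ideal.Quotient.mk I₃ B
    refine (Ideal.Quotient.eq).2 ?_
    rw [show mvβ P - B = -(B - mvβ P) by ring]
    exact I₃.neg_mem hP2
  refine ⟨RingEquiv.ofBijective Φ ⟨hinj, hsurj⟩, ?_, ?_, ?_, ?_, ?_, ?_⟩
  · show (Φ₀ (Ideal.Quotient.mk I₆ (X 0)) : HBSO3xBSO3 × HBS1xBSO3) = _
    rw [hΦ₀mk, Fh_apply, show mvα (X 0) = 0 by simp [mvα],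
      show mvβ (X 0) = X 0 by simp [mvβ], map_zero]
  · show (Φ₀ (Ideal.Quotient.mk I₆ (X 1)) : HBSO3xBSO3 × HBS1xBSO3) = _
    rw [hΦ₀mk, Fh_apply, show mvα (X 1) = X 0 by simp [mvα],
      show mvβ (X 1) = X 1 by simp [mvβ]]
  · show (Φ₀ (Ideal.Quotient.mk I₆ (X 2)) : HBSO3xBSO3 × HBS1xBSO3) = _
    rw [hΦ₀mk, Fh_apply, show mvα (X 2) = X 1 by simp [mvα],
      show mvβ (X 2) = X 2 by simp [mvβ]]
  · show (Φ₀ (Ideal.Quotient.mk I₆ (X 3)) : HBSO3xBSO3 × HBS1xBSO3) = _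
    rw [hΦ₀mk, Fh_apply, show mvα (X 3) = X 2 by simp [mvα],
      show mvβ (X 3) = X 1 by simp [mvβ]]
  · show (Φ₀ (Ideal.Quotient.mk I₆ (X 4)) : HBSO3xBSO3 × HBS1xBSO3) = _
    rw [hΦ₀mk, Fh_apply, show mvα (X 4) = X 3 by simp [mvα],
      show mvβ (X 4) = X 2 by simp [mvβ]]
  · show (Φ₀ (Ideal.Quotient.mk I₆ (X 5)) : HBSO3xBSO3 × HBS1xBSO3) = _
    rw [hΦ₀mk, Fh_apply, show mvα (X 5) = X 4 by simp [mvα],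
      show mvβ (X 5) = 0 by simp [mvβ], map_zero]
end
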